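/- arXiv:1911.13097 — 8 statements merged into one kernel-verified Lean document; each statement's English description precedes it below -/
import Mathlib

section
/- In the search network together with the readout network for a finite directed graph G = (V, E), every neuron (the transmitter Tr, every H_e, and every R_e) spikes at most once over the entire run; consequently the total number of spikes over all time is at most 2|E| + 1. (This establishes the O(n) energy bound of the neuromorphic oracle query.) -/
/-!
Every neuron `H e`, `R e` has threshold `|E| + 2`, reset `0` and no leak, so after a spike its
potential is bounded by the number of input spikes received since. Its input comes from at most
`|E|` in-neighbours plus one external source (`Tr` for `H`, `H e` for `R`), and by induction on the
time horizon each of these spikes at most once. Hence a neuron receives at most `|E| + 1` input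
spikes after its first spike and never reaches the threshold again. The transmitter has no input,
so it can only spike at time `0`.
-/

open Finset

lemma Finset.sum_boole_le_one {α R : Type*} [Semiring R] [PartialOrder R] [IsOrderedRing R]
    {s : Finset α} {P : α → Prop} [DecidablePred P] (h : ({x | P x} ∩ ↑s).Subsingleton) :
    ∑ x ∈ s, (if P x then (1 : R) else 0) ≤ 1 := by
  rw [sum_boole]
  have hcard : #(s.filter P) ≤ 1 := card_le_one.mpr fun a ha b hb =>
    h ⟨(mem_filter.mp ha).2, (mem_filter.mp ha).1⟩ ⟨(mem_filter.mp hb).2, (mem_filter.mp hb).1⟩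
  exact (Nat.mono_cast hcard).trans_eq Nat.cast_one

lemma transmitter_spike_times_subsingleton {W : ℕ → ℤ}
    (hW : ∀ τ, W (τ + 1) = max 0 ((1 : ℤ) * (if (1 : ℤ) ≤ W τ then (0 : ℤ) else W τ))) :
    {τ | (1 : ℤ) ≤ W τ}.Subsingleton := by
  refine (Set.subsingleton_singleton (a := 0)).anti fun τ hτ => ?_
  cases τ with
  | zero => rfl
  | succ τ =>
    have hzero : W (τ + 1) = 0 := by
      rw [hW]
      split_ifs <;> omega
    simp_all

lemma potential_le_sum_Ico_input_of_spike {W inp : ℕ → ℤ} {T : ℤ} (hinp : ∀ τ, 0 ≤ inp τ)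
    (hW : ∀ τ, W (τ + 1) = max 0 ((if T ≤ W τ then 0 else W τ) + inp τ))
    {a b : ℕ} (hab : a < b) (ha : T ≤ W a) : W b ≤ ∑ σ ∈ Ico a b, inp σ := by
  induction b, hab using Nat.le_induction with
  | base => simp [hW a, ha, hinp a]
  | succ m ham ih =>
    have hsum_nonneg : 0 ≤ ∑ σ ∈ Ico a m, inp σ := sum_nonneg fun σ _ => hinp σ
    have hreset : (if T ≤ W m then 0 else W m) ≤ ∑ σ ∈ Ico a m, inp σ := by
      split_ifs
      · exact hsum_nonneg
      · exact ih
    rw [hW m, sum_Ico_succ_top (by omega)]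
    exact max_le (add_nonneg hsum_nonneg (hinp m)) (by linarith)

section ResetNetwork

variable {ι : Type*} {S : Finset ι} {N : ι → Finset ι} {W : ι → ℕ → ℤ}
  {P : ι → ℕ → Prop} [∀ i, DecidablePred (P i)] {T : ℤ}

lemma sum_Ico_network_input_le (hN : ∀ i ∈ S, N i ⊆ S)
    (hP : ∀ i ∈ S, {τ | P i τ}.Subsingleton) {n : ℕ}
    (hbefore : ∀ j ∈ S, ({τ | T ≤ W j τ} ∩ Set.Iio n).Subsingleton)
    {i : ι} (hi : i ∈ S) {a b : ℕ} (hb : b ≤ n) :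
    ∑ σ ∈ Ico a b, ((∑ j ∈ N i, if T ≤ W j σ then (1 : ℤ) else 0) + if P i σ then 1 else 0)
      ≤ #(N i) + 1 := by
  have hwindow : (↑(Ico a b) : Set ℕ) ⊆ Set.Iio n := fun σ hσ =>
    lt_of_lt_of_le (mem_Ico.mp hσ).2 hb
  have hneighbours : ∑ j ∈ N i, ∑ σ ∈ Ico a b, (if T ≤ W j σ then (1 : ℤ) else 0)
      ≤ ∑ _j ∈ N i, (1 : ℤ) :=
    sum_le_sum fun j hj => sum_boole_le_one <|
      (hbefore j (hN i hi hj)).anti (Set.inter_subset_inter_right _ hwindow)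
  have hexternal : ∑ σ ∈ Ico a b, (if P i σ then (1 : ℤ) else 0) ≤ 1 :=
    sum_boole_le_one <| (hP i hi).anti Set.inter_subset_left
  rw [sum_add_distrib, sum_comm]
  simp only [sum_const, nsmul_eq_mul, mul_one] at hneighbours
  linarith

variable (hN : ∀ i ∈ S, N i ⊆ S) (hT : ∀ i ∈ S, (#(N i) : ℤ) + 2 ≤ T)
  (hW : ∀ i ∈ S, ∀ τ, W i (τ + 1) = max 0 ((if T ≤ W i τ then 0 else W i τ) +
    ((∑ j ∈ N i, if T ≤ W j τ then (1 : ℤ) else 0) + if P i τ then 1 else 0)))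
  (hP : ∀ i ∈ S, {τ | P i τ}.Subsingleton)
include hN hT hW hP

lemma network_spike_times_subsingleton_before (n : ℕ) :
    ∀ i ∈ S, ({τ | T ≤ W i τ} ∩ Set.Iio n).Subsingleton := by
  induction n with
  | zero => simp
  | succ n ih =>
    have hno_second : ∀ i ∈ S, ∀ a b, a < b → b < n + 1 → T ≤ W i a → ¬ T ≤ W i b := by
      intro i hi a b hab hb ha hb_spike
      have hinput_nonneg : ∀ σ, (0 : ℤ) ≤
          (∑ j ∈ N i, if T ≤ W j σ then (1 : ℤ) else 0) + if P i σ then 1 else 0 :=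
        fun σ => by positivity
      have := potential_le_sum_Ico_input_of_spike hinput_nonneg (hW i hi) hab ha
      have := sum_Ico_network_input_le hN hP ih hi (a := a) (by omega : b ≤ n)
      linarith [hT i hi]
    intro i hi a ⟨ha, ha_lt⟩ b ⟨hb, hb_lt⟩
    rcases lt_trichotomy a b with hab | rfl | hba
    · exact absurd hb (hno_second i hi a b hab hb_lt ha)
    · rfl
    · exact absurd ha (hno_second i hi b a hba ha_lt hb)

lemma network_spike_times_subsingleton : ∀ i ∈ S, {τ | T ≤ W i τ}.Subsingleton :=
  fun i hi a ha b hb =>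
    network_spike_times_subsingleton_before hN hT hW hP (max a b + 1) i hi
      ⟨ha, by simp⟩ ⟨hb, by simp⟩

end ResetNetwork

lemma sum_range_spikes_le {ι : Type*} (E : Finset ι) (A : ℕ → Prop) (B C : ι → ℕ → Prop)
    [DecidablePred A] [∀ e, DecidablePred (B e)] [∀ e, DecidablePred (C e)]
    (hA : {τ | A τ}.Subsingleton) (hB : ∀ e ∈ E, {τ | B e τ}.Subsingleton)
    (hC : ∀ e ∈ E, {τ | C e τ}.Subsingleton) (n : ℕ) :
    ∑ τ ∈ range n, ((if A τ then 1 else 0) +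
      ∑ e ∈ E, ((if B e τ then 1 else 0) + (if C e τ then 1 else 0))) ≤ 2 * #E + 1 := by
  have hle_one {Q : ℕ → Prop} [DecidablePred Q] (hQ : {τ | Q τ}.Subsingleton) :
      ∑ τ ∈ range n, (if Q τ then 1 else 0) ≤ 1 :=
    sum_boole_le_one (hQ.anti Set.inter_subset_left)
  calc _ = ∑ τ ∈ range n, (if A τ then 1 else 0) +
        ∑ e ∈ E, (∑ τ ∈ range n, (if B e τ then 1 else 0) +
          ∑ τ ∈ range n, (if C e τ then 1 else 0)) := by
        simp only [sum_add_distrib, sum_comm (s := range n)]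
    _ ≤ 1 + ∑ _e ∈ E, (1 + 1) :=
        add_le_add (hle_one hA) (sum_le_sum fun e he => add_le_add (hle_one (hB e he))
          (hle_one (hC e he)))
    _ = 2 * #E + 1 := by simp [mul_comm, add_comm]

theorem search_readout_energy_bound_general
    {V : Type*} [DecidableEq V] (E : Finset (V × V)) (s t : V)
    (VTr : ℕ → ℤ) (VH VR : V × V → ℕ → ℤ)
    (hTrEvol : ∀ τ, VTr (τ + 1) =
      max 0 ((1 : ℤ) * (if (1 : ℤ) ≤ VTr τ then (0 : ℤ) else VTr τ)))
    (hHEvol : ∀ e ∈ E, ∀ τ, VH e (τ + 1) =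
      max 0 ((1 : ℤ) * (if (E.card : ℤ) + 2 ≤ VH e τ then (0 : ℤ) else VH e τ) +
        (∑ e' ∈ E.filter (fun e' => e'.1 = e.2),
          (if (E.card : ℤ) + 2 ≤ VH e' τ then (1 : ℤ) else 0)) +
        (if e.2 = t ∧ (1 : ℤ) ≤ VTr τ then (1 : ℤ) else 0)))
    (hREvol : ∀ e ∈ E, ∀ τ, VR e (τ + 1) =
      max 0 ((1 : ℤ) * (if (E.card : ℤ) + 2 ≤ VR e τ then (0 : ℤ) else VR e τ) +
        (if e.1 = s ∧ (E.card : ℤ) + 2 ≤ VH e τ then (1 : ℤ) else 0) +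
        (∑ e' ∈ E.filter (fun e' => e'.2 = e.1),
          (if (E.card : ℤ) + 2 ≤ VR e' τ then (1 : ℤ) else 0)))) :
    (∀ τ₁ τ₂, (1 : ℤ) ≤ VTr τ₁ → (1 : ℤ) ≤ VTr τ₂ → τ₁ = τ₂) ∧
    (∀ e ∈ E, ∀ τ₁ τ₂, (E.card : ℤ) + 2 ≤ VH e τ₁ → (E.card : ℤ) + 2 ≤ VH e τ₂ →
      τ₁ = τ₂) ∧
    (∀ e ∈ E, ∀ τ₁ τ₂, (E.card : ℤ) + 2 ≤ VR e τ₁ → (E.card : ℤ) + 2 ≤ VR e τ₂ →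
      τ₁ = τ₂) ∧
    (∀ N : ℕ, ∑ τ ∈ Finset.range N,
        ((if (1 : ℤ) ≤ VTr τ then 1 else 0) +
          ∑ e ∈ E, ((if (E.card : ℤ) + 2 ≤ VH e τ then 1 else 0) +
            (if (E.card : ℤ) + 2 ≤ VR e τ then 1 else 0))) ≤ 2 * E.card + 1) := by
  have hdeg {p : V × V → Prop} [DecidablePred p] : ((E.filter p).card : ℤ) + 2 ≤ E.card + 2 := by
    exact_mod_cast Nat.add_le_add_right (card_filter_le E p) 2
  have hTr := transmitter_spike_times_subsingleton hTrEvol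
  have hH : ∀ e ∈ E, {τ | (E.card : ℤ) + 2 ≤ VH e τ}.Subsingleton :=
    network_spike_times_subsingleton (P := fun e τ => e.2 = t ∧ (1 : ℤ) ≤ VTr τ) (fun _ _ => filter_subset _ E) (fun _ _ => hdeg)
      (fun e he τ => by rw [hHEvol e he τ]; congr 1; ring)
      (fun _ _ => hTr.anti fun _ => And.right)
  have hR : ∀ e ∈ E, {τ | (E.card : ℤ) + 2 ≤ VR e τ}.Subsingleton :=
    network_spike_times_subsingleton (P := fun e τ => e.1 = s ∧ (E.card : ℤ) + 2 ≤ VH e τ) (fun _ _ => filter_subset _ E) (fun _ _ => hdeg)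
      (fun e he τ => by rw [hREvol e he τ]; congr 1; ring)
      (fun e he => (hH e he).anti fun _ => And.right)
  exact ⟨fun _ _ h₁ h₂ => hTr h₁ h₂, fun e he _ _ h₁ h₂ => hH e he h₁ h₂,
    fun e he _ _ h₁ h₂ => hR e he h₁ h₂, sum_range_spikes_le E _ _ _ hTr hH hR⟩

/-- In the search network together with the readout network for a finite
directed graph `G = (V, E)` (transmitter `Tr`, neurons `H e` and `R e` for `e ∈ E`),
every neuron spikes at most once over the entire run; consequently the total number of
spikes over all time is at most `2|E| + 1`. -/
theorem search_readout_energy_bound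
    {V : Type*} [DecidableEq V] (E : Finset (V × V)) (s t : V)
    (hst : s ≠ t) (hsIn : ∀ e ∈ E, e.2 ≠ s) (htOut : ∀ e ∈ E, e.1 ≠ t)
    (VTr : ℕ → ℤ) (VH VR : V × V → ℕ → ℤ)
    (hTr0 : VTr 0 = 1)
    (hTrEvol : ∀ τ, VTr (τ + 1) =
      max 0 ((1 : ℤ) * (if (1 : ℤ) ≤ VTr τ then (0 : ℤ) else VTr τ)))
    (hH0 : ∀ e ∈ E, VH e 0 = (E.card : ℤ) + 1)
    (hHEvol : ∀ e ∈ E, ∀ τ, VH e (τ + 1) =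
      max 0 ((1 : ℤ) * (if (E.card : ℤ) + 2 ≤ VH e τ then (0 : ℤ) else VH e τ) +
        (∑ e' ∈ E.filter (fun e' => e'.1 = e.2),
          (if (E.card : ℤ) + 2 ≤ VH e' τ then (1 : ℤ) else 0)) +
        (if e.2 = t ∧ (1 : ℤ) ≤ VTr τ then (1 : ℤ) else 0)))
    (hR0 : ∀ e ∈ E, VR e 0 = (E.card : ℤ) + 1)
    (hREvol : ∀ e ∈ E, ∀ τ, VR e (τ + 1) =
      max 0 ((1 : ℤ) * (if (E.card : ℤ) + 2 ≤ VR e τ then (0 : ℤ) else VR e τ) +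
        (if e.1 = s ∧ (E.card : ℤ) + 2 ≤ VH e τ then (1 : ℤ) else 0) +
        (∑ e' ∈ E.filter (fun e' => e'.2 = e.1),
          (if (E.card : ℤ) + 2 ≤ VR e' τ then (1 : ℤ) else 0)))) :
    (∀ τ₁ τ₂, (1 : ℤ) ≤ VTr τ₁ → (1 : ℤ) ≤ VTr τ₂ → τ₁ = τ₂) ∧
    (∀ e ∈ E, ∀ τ₁ τ₂, (E.card : ℤ) + 2 ≤ VH e τ₁ → (E.card : ℤ) + 2 ≤ VH e τ₂ →
      τ₁ = τ₂) ∧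
    (∀ e ∈ E, ∀ τ₁ τ₂, (E.card : ℤ) + 2 ≤ VR e τ₁ → (E.card : ℤ) + 2 ≤ VR e τ₂ →
      τ₁ = τ₂) ∧
    (∀ N : ℕ, ∑ τ ∈ Finset.range N,
        ((if (1 : ℤ) ≤ VTr τ then 1 else 0) +
          ∑ e ∈ E, ((if (E.card : ℤ) + 2 ≤ VH e τ then 1 else 0) +
            (if (E.card : ℤ) + 2 ≤ VR e τ then 1 else 0))) ≤ 2 * E.card + 1) :=
  search_readout_energy_bound_general E s t VTr VH VR hTrEvol hHEvol hREvol
end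

section
/- In the search network for a finite directed graph G = (V, E) with sink t, for every edge e = (a, b) ∈ E: the neuron H_e spikes if and only if b = t or there is a directed path in G from b to t; and in that case its (unique) spike occurs at time 1 + ℓ(b), where ℓ(b) denotes the minimum number of edges of a directed path from b to t (with ℓ(t) = 0) and the transmitter spikes at time 0. (Spike timing in the wave propagation encodes the shortest path length to the sink.) -/
/-- `reachIn E n a b` holds iff there is a directed path with exactly `n` edges
from `a` to `b` using edges in `E`. -/
def reachIn {V : Type*} (E : Finset (V × V)) : ℕ → V → V → Prop
  | 0, a, b => a = b
  | n + 1, a, b => ∃ c, (a, c) ∈ E ∧ reachIn E n c b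

/-- Shortest path length to the sink. -/
noncomputable def ell {V : Type*} (E : Finset (V × V)) (t b : V) : ℕ :=
  sInf {n | reachIn E n b t}

lemma ell_mem {V : Type*} (E : Finset (V × V)) (t : V) {b : V}
    (h : ∃ n, reachIn E n b t) : reachIn E (ell E t b) b t :=
  Nat.sInf_mem h

lemma ell_le {V : Type*} (E : Finset (V × V)) (t : V) {b : V} {n : ℕ}
    (h : reachIn E n b t) : ell E t b ≤ n :=
  Nat.sInf_le h

lemma ell_self {V : Type*} (E : Finset (V × V)) (t : V) : ell E t t = 0 :=
  Nat.sInf_eq_zero.mpr (Or.inl rfl)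

lemma ell_eq_zero {V : Type*} (E : Finset (V × V)) (t : V) {b : V}
    (hR : ∃ n, reachIn E n b t) (h : ell E t b = 0) : b = t := by
  have := ell_mem E t hR
  rw [h] at this
  exact this

lemma ell_step {V : Type*} (E : Finset (V × V)) (t : V) {a c : V}
    (hac : (a, c) ∈ E) (hc : ∃ n, reachIn E n c t) :
    (∃ n, reachIn E n a t) ∧ ell E t a ≤ ell E t c + 1 := by
  have h : reachIn E (ell E t c + 1) a t := ⟨c, hac, ell_mem E t hc⟩
  exact ⟨⟨_, h⟩, ell_le E t h⟩

lemma ell_succ {V : Type*} (E : Finset (V × V)) (t : V) {a : V} {k : ℕ}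
    (hR : ∃ n, reachIn E n a t) (h : ell E t a = k + 1) :
    ∃ c, (a, c) ∈ E ∧ (∃ n, reachIn E n c t) ∧ ell E t c = k := by
  have hm := ell_mem E t hR
  rw [h] at hm
  obtain ⟨c, hac, hk⟩ := hm
  refine ⟨c, hac, ⟨k, hk⟩, le_antisymm (ell_le E t hk) ?_⟩
  have h2 := (ell_step E t hac ⟨k, hk⟩).2
  omega

lemma ite_le_one' (p : Prop) [Decidable p] : (if p then (1 : ℤ) else 0) ≤ 1 := by
  split <;> omega

lemma ite_nonneg' (p : Prop) [Decidable p] : (0 : ℤ) ≤ if p then (1 : ℤ) else 0 := by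
  split <;> omega

/-- In the search network for a finite directed graph `G = (V, E)` with
sink `t`, a neuron `H (a, b)` (for `(a, b) ∈ E`) spikes iff `b = t` or there is a
directed path from `b` to `t`; in that case its unique spike occurs at time
`1 + ℓ(b)`, where `ℓ(b)` is the minimum number of edges of a directed path from `b`
to `t` (with `ℓ(t) = 0`), taking the transmitter's spike at time `0`. -/
theorem search_network_spike_timing
    {V : Type*} [DecidableEq V] (E : Finset (V × V)) (s t : V)
    (hst : s ≠ t) (hsIn : ∀ e ∈ E, e.2 ≠ s) (htOut : ∀ e ∈ E, e.1 ≠ t)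
    (VTr : ℕ → ℤ) (VH : V × V → ℕ → ℤ)
    (hTr0 : VTr 0 = 1)
    (hTrEvol : ∀ τ, VTr (τ + 1) =
      max 0 ((1 : ℤ) * (if (1 : ℤ) ≤ VTr τ then (0 : ℤ) else VTr τ)))
    (hH0 : ∀ e ∈ E, VH e 0 = (E.card : ℤ) + 1)
    (hHEvol : ∀ e ∈ E, ∀ τ, VH e (τ + 1) =
      max 0 ((1 : ℤ) * (if (E.card : ℤ) + 2 ≤ VH e τ then (0 : ℤ) else VH e τ) +
        (∑ e' ∈ E.filter (fun e' => e'.1 = e.2),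
          (if (E.card : ℤ) + 2 ≤ VH e' τ then (1 : ℤ) else 0)) +
        (if e.2 = t ∧ (1 : ℤ) ≤ VTr τ then (1 : ℤ) else 0))) :
    ∀ e ∈ E,
      ((∃ τ, (E.card : ℤ) + 2 ≤ VH e τ) ↔ ∃ n, reachIn E n e.2 t) ∧
      ((∃ n, reachIn E n e.2 t) →
        ∀ τ, ((E.card : ℤ) + 2 ≤ VH e τ ↔ τ = 1 + sInf {n | reachIn E n e.2 t})) := by
  classical
  have hN0 : (0 : ℤ) ≤ (E.card : ℤ) := Int.natCast_nonneg _
  -- transmitter dynamics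
  have hTr : ∀ τ, VTr τ = if τ = 0 then 1 else 0 := by
    intro τ
    induction τ with
    | zero => simpa using hTr0
    | succ τ ih =>
      rw [hTrEvol τ, ih]
      by_cases h : τ = 0 <;> simp [h]
  have hTne : ∀ τ : ℕ, τ ≠ 0 → ¬ ((1 : ℤ) ≤ VTr τ) := by
    intro τ h
    rw [hTr τ, if_neg h]
    omega
  -- generic sum bound
  have sum_le : ∀ (a : V) (f : V × V → ℤ), (∀ x, f x ≤ 1) →
      (∑ e' ∈ E.filter (fun e' => e'.1 = a), f e') ≤ (E.card : ℤ) := by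
    intro a f hf
    calc (∑ e' ∈ E.filter (fun e' => e'.1 = a), f e')
        ≤ ∑ _e' ∈ E.filter (fun e' => e'.1 = a), (1 : ℤ) :=
          Finset.sum_le_sum (fun i _ => hf i)
      _ = ((E.filter (fun e' => e'.1 = a)).card : ℤ) := by simp
      _ ≤ (E.card : ℤ) := by exact_mod_cast Finset.card_filter_le _ _
  -- characterization of spiking from the four invariant properties
  have charOf : ∀ (e : V × V), e ∈ E → ∀ (τ : ℕ),
      (¬ (∃ n, reachIn E n e.2 t) → VH e τ = (E.card : ℤ) + 1) →
      ((∃ n, reachIn E n e.2 t) → τ ≤ ell E t e.2 → VH e τ = (E.card : ℤ) + 1) →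
      ((∃ n, reachIn E n e.2 t) → τ = ell E t e.2 + 1 → (E.card : ℤ) + 2 ≤ VH e τ) →
      ((∃ n, reachIn E n e.2 t) → ell E t e.2 + 2 ≤ τ →
        VH e τ = ∑ e' ∈ E.filter (fun e' => e'.1 = e.2),
          (if (∃ n, reachIn E n e'.2 t) ∧ ell E t e.2 ≤ ell E t e'.2 ∧ ell E t e'.2 + 2 ≤ τ
            then (1 : ℤ) else 0)) →
      (((E.card : ℤ) + 2 ≤ VH e τ) ↔ ((∃ n, reachIn E n e.2 t) ∧ τ = ell E t e.2 + 1)) := by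
    intro e _he τ h1 h2 h3 h4
    constructor
    · intro hsp
      by_cases hR : ∃ n, reachIn E n e.2 t
      · refine ⟨hR, ?_⟩
        by_contra hne
        rcases lt_trichotomy τ (ell E t e.2 + 1) with hlt | heq | hgt
        · have := h2 hR (by omega); omega
        · exact hne heq
        · have hb := h4 hR (by omega)
          have hle : VH e τ ≤ (E.card : ℤ) := by
            rw [hb]
            exact sum_le _ _ (fun x => ite_le_one' _)
          omega
      · have := h1 hR; omega
    · rintro ⟨hR, hτ⟩
      exact h3 hR hτ
  -- the master invariant, by induction on time
  have key : ∀ τ, ∀ e ∈ E,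
      (¬ (∃ n, reachIn E n e.2 t) → VH e τ = (E.card : ℤ) + 1) ∧
      ((∃ n, reachIn E n e.2 t) → τ ≤ ell E t e.2 → VH e τ = (E.card : ℤ) + 1) ∧
      ((∃ n, reachIn E n e.2 t) → τ = ell E t e.2 + 1 → (E.card : ℤ) + 2 ≤ VH e τ) ∧
      ((∃ n, reachIn E n e.2 t) → ell E t e.2 + 2 ≤ τ →
        VH e τ = ∑ e' ∈ E.filter (fun e' => e'.1 = e.2),
          (if (∃ n, reachIn E n e'.2 t) ∧ ell E t e.2 ≤ ell E t e'.2 ∧ ell E t e'.2 + 2 ≤ τ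
            then (1 : ℤ) else 0)) := by
    intro τ
    induction τ with
    | zero =>
      intro e he
      exact ⟨fun _ => hH0 e he, fun _ _ => hH0 e he,
        fun _ h => by omega, fun _ h => by omega⟩
    | succ τ ih =>
      have spike : ∀ e' ∈ E, (((E.card : ℤ) + 2 ≤ VH e' τ) ↔
          ((∃ n, reachIn E n e'.2 t) ∧ τ = ell E t e'.2 + 1)) := by
        intro e' he'
        obtain ⟨h1, h2, h3, h4⟩ := ih e' he'
        exact charOf e' he' τ h1 h2 h3 h4
      intro e he
      -- incoming edges of a reachable head are themselves "real" edges from e.2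
      have hedge : ∀ e' ∈ E.filter (fun e' => e'.1 = e.2), (e.2, e'.2) ∈ E := by
        intro e' he'
        obtain ⟨hmem, hfst⟩ := Finset.mem_filter.mp he'
        have : e' = (e.2, e'.2) := by
          rw [← hfst]
        rwa [this] at hmem
      have hEv := hHEvol e he τ
      rw [one_mul] at hEv
      -- rewrite the sum via the spike characterization
      have hS : (∑ e' ∈ E.filter (fun e' => e'.1 = e.2),
            (if (E.card : ℤ) + 2 ≤ VH e' τ then (1 : ℤ) else 0))
          = ∑ e' ∈ E.filter (fun e' => e'.1 = e.2),
            (if (∃ n, reachIn E n e'.2 t) ∧ τ = ell E t e'.2 + 1 then (1 : ℤ) else 0) := by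
        refine Finset.sum_congr rfl ?_
        intro e' he'
        exact if_congr (spike e' (Finset.mem_filter.mp he').1) rfl rfl
      rw [hS] at hEv
      have hSnn : (0 : ℤ) ≤ ∑ e' ∈ E.filter (fun e' => e'.1 = e.2),
          (if (∃ n, reachIn E n e'.2 t) ∧ τ = ell E t e'.2 + 1 then (1 : ℤ) else 0) :=
        Finset.sum_nonneg (fun i _ => ite_nonneg' _)
      refine ⟨?_, ?_, ?_, ?_⟩
      · -- not reachable
        intro hR
        have hnt : e.2 ≠ t := fun h => hR ⟨0, h⟩
        have hself : VH e τ = (E.card : ℤ) + 1 := (ih e he).1 hR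
        have hSz : (∑ e' ∈ E.filter (fun e' => e'.1 = e.2),
            (if (∃ n, reachIn E n e'.2 t) ∧ τ = ell E t e'.2 + 1 then (1 : ℤ) else 0)) = 0 := by
          refine Finset.sum_eq_zero ?_
          intro e' he'
          rw [if_neg]
          rintro ⟨hR', -⟩
          exact hR (ell_step E t (hedge e' he') hR').1
        rw [hEv, hself, hSz, if_neg (by omega : ¬ ((E.card : ℤ) + 2 ≤ (E.card : ℤ) + 1)),
          if_neg (fun h => hnt h.1)]
        rw [max_eq_right (by omega)]
        ring
      · -- before the spike
        intro hR hle
        have hLpos : 1 ≤ ell E t e.2 := by omega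
        have hnt : e.2 ≠ t := by
          intro h
          have : ell E t e.2 = 0 := by rw [h]; exact ell_self E t
          omega
        have hself : VH e τ = (E.card : ℤ) + 1 := (ih e he).2.1 hR (by omega)
        have hSz : (∑ e' ∈ E.filter (fun e' => e'.1 = e.2),
            (if (∃ n, reachIn E n e'.2 t) ∧ τ = ell E t e'.2 + 1 then (1 : ℤ) else 0)) = 0 := by
          refine Finset.sum_eq_zero ?_
          intro e' he'
          rw [if_neg]
          rintro ⟨hR', hτ⟩
          have hst' := (ell_step E t (hedge e' he') hR').2
          omega
        rw [hEv, hself, hSz, if_neg (by omega : ¬ ((E.card : ℤ) + 2 ≤ (E.card : ℤ) + 1)),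
          if_neg (fun h => hnt h.1)]
        rw [max_eq_right (by omega)]
        ring
      · -- the spike time
        intro hR heq
        have hτL : τ = ell E t e.2 := by omega
        have hself : VH e τ = (E.card : ℤ) + 1 := (ih e he).2.1 hR (by omega)
        rw [hEv, hself, if_neg (by omega : ¬ ((E.card : ℤ) + 2 ≤ (E.card : ℤ) + 1))]
        by_cases hL0 : ell E t e.2 = 0
        · have ht2 : e.2 = t := ell_eq_zero E t hR hL0
          have hτ0 : τ = 0 := by omega
          have hTrpos : (1 : ℤ) ≤ VTr τ := by rw [hτ0, hTr0]
          rw [if_pos ⟨ht2, hTrpos⟩]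
          have : (E.card : ℤ) + 2 ≤ (E.card : ℤ) + 1 +
              (∑ e' ∈ E.filter (fun e' => e'.1 = e.2),
                (if (∃ n, reachIn E n e'.2 t) ∧ τ = ell E t e'.2 + 1 then (1 : ℤ) else 0)) + 1 := by
            omega
          exact le_trans this (le_max_right _ _)
        · obtain ⟨k, hk⟩ : ∃ k, ell E t e.2 = k + 1 := ⟨ell E t e.2 - 1, by omega⟩
          obtain ⟨c, hac, hRc, hlc⟩ := ell_succ E t hR hk
          have hmemf : (e.2, c) ∈ E.filter (fun e' => e'.1 = e.2) :=
            Finset.mem_filter.mpr ⟨hac, rfl⟩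
          have hone : (1 : ℤ) ≤ ∑ e' ∈ E.filter (fun e' => e'.1 = e.2),
              (if (∃ n, reachIn E n e'.2 t) ∧ τ = ell E t e'.2 + 1 then (1 : ℤ) else 0) := by
            have hle := Finset.single_le_sum
              (f := fun e' => (if (∃ n, reachIn E n e'.2 t) ∧ τ = ell E t e'.2 + 1
                then (1 : ℤ) else 0))
              (fun i _ => ite_nonneg' _) hmemf
            refine le_trans ?_ hle
            have h1 : (if (∃ n, reachIn E n c t) ∧ τ = ell E t c + 1 then (1 : ℤ) else 0) = 1 :=
              if_pos ⟨hRc, by omega⟩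
            exact le_of_eq h1.symm
          have hTnn : (0 : ℤ) ≤ (if e.2 = t ∧ (1 : ℤ) ≤ VTr τ then (1 : ℤ) else 0) := by
            split <;> omega
          refine le_trans ?_ (le_max_right _ _)
          omega
      · -- after the spike
        intro hR hge
        have hnt0 : τ ≠ 0 := by omega
        have hT0 : (if e.2 = t ∧ (1 : ℤ) ≤ VTr τ then (1 : ℤ) else 0) = 0 := by
          rw [if_neg]
          rintro ⟨-, h⟩
          exact hTne τ hnt0 h
        rw [hT0] at hEv
        by_cases hc : τ = ell E t e.2 + 1
        · -- just spiked: reset, then collect inputs arriving now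
          have hsp : (E.card : ℤ) + 2 ≤ VH e τ := (ih e he).2.2.1 hR hc
          rw [if_pos hsp] at hEv
          rw [hEv, max_eq_right (by omega), zero_add, add_zero]
          refine Finset.sum_congr rfl ?_
          intro e' he'
          refine if_congr ?_ rfl rfl
          constructor
          · rintro ⟨hR', h2⟩
            exact ⟨hR', by omega, by omega⟩
          · rintro ⟨hR', h2, h3⟩
            exact ⟨hR', by omega⟩
        · -- accumulating, strictly bounded below threshold
          have hge2 : ell E t e.2 + 2 ≤ τ := by omega
          have hprev := (ih e he).2.2.2 hR hge2
          have hSoldnn : (0 : ℤ) ≤ ∑ e' ∈ E.filter (fun e' => e'.1 = e.2),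
              (if (∃ n, reachIn E n e'.2 t) ∧ ell E t e.2 ≤ ell E t e'.2 ∧
                ell E t e'.2 + 2 ≤ τ then (1 : ℤ) else 0) :=
            Finset.sum_nonneg (fun i _ => ite_nonneg' _)
          have hbound : (∑ e' ∈ E.filter (fun e' => e'.1 = e.2),
              (if (∃ n, reachIn E n e'.2 t) ∧ ell E t e.2 ≤ ell E t e'.2 ∧
                ell E t e'.2 + 2 ≤ τ then (1 : ℤ) else 0)) ≤ (E.card : ℤ) :=
            sum_le e.2 _ (fun x => ite_le_one' _)
          have hnosp : ¬ ((E.card : ℤ) + 2 ≤ VH e τ) := by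
            rw [hprev]
            omega
          rw [if_neg hnosp, hprev] at hEv
          have hpt : ∀ e' ∈ E.filter (fun e' => e'.1 = e.2),
              (if (∃ n, reachIn E n e'.2 t) ∧ ell E t e.2 ≤ ell E t e'.2 ∧
                  ell E t e'.2 + 2 ≤ τ + 1 then (1 : ℤ) else 0)
              = (if (∃ n, reachIn E n e'.2 t) ∧ ell E t e.2 ≤ ell E t e'.2 ∧
                  ell E t e'.2 + 2 ≤ τ then (1 : ℤ) else 0)
                + (if (∃ n, reachIn E n e'.2 t) ∧ τ = ell E t e'.2 + 1 then (1 : ℤ) else 0) := by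
            intro e' _he'
            by_cases hR' : ∃ n, reachIn E n e'.2 t
            · simp only [eq_true hR', true_and]
              split_ifs <;> omega
            · simp [hR']
          rw [hEv, max_eq_right (by omega), add_zero,
            Finset.sum_congr rfl hpt, Finset.sum_add_distrib]
  -- conclude
  intro e he
  have hdef : ell E t e.2 = sInf {n | reachIn E n e.2 t} := rfl
  have char : ∀ τ, (((E.card : ℤ) + 2 ≤ VH e τ) ↔
      ((∃ n, reachIn E n e.2 t) ∧ τ = ell E t e.2 + 1)) := by
    intro τ
    obtain ⟨h1, h2, h3, h4⟩ := key τ e he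
    exact charOf e he τ h1 h2 h3 h4
  constructor
  · constructor
    · rintro ⟨τ, hsp⟩
      exact ((char τ).mp hsp).1
    · intro hR
      exact ⟨ell E t e.2 + 1, (char _).mpr ⟨hR, rfl⟩⟩
  · intro hR τ
    rw [char τ]
    constructor
    · rintro ⟨-, h⟩
      omega
    · intro h
      exact ⟨hR, by omega⟩
end

section
/- In the search network together with the readout network for a finite directed graph G = (V, E) with source s and sink t: some readout neuron R_{(a,t)} coding an edge into the sink spikes (at some time) if and only if there exists a directed path from s to t in G. (Correctness of the neuromorphic search for an augmenting path: applied to the subgraph of non-exhausted edges, a sink readout neuron fires iff an augmenting path exists.) -/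
open Finset

/-- The update of the neuron `(θ, 0, 1)` with potential `v` and synaptic input `i`. -/
def lifStep (θ v i : ℤ) : ℤ :=
  max 0 ((if θ ≤ v then 0 else v) + i)

def spikeCount {ι : Type*} (θ : ℤ) (S : Finset ι) (W : ι → ℕ → ℤ) (τ : ℕ) : ℤ :=
  ∑ x ∈ S, if θ ≤ W x τ then 1 else 0

section Neuron

variable {ι : Type*} {θ : ℤ}

lemma spikeCount_nonneg (S : Finset ι) (W : ι → ℕ → ℤ) (τ : ℕ) : 0 ≤ spikeCount θ S W τ :=
  sum_nonneg fun _ _ => ite_nonneg zero_le_one le_rfl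

lemma spikeCount_pos_iff {S : Finset ι} {W : ι → ℕ → ℤ} {τ : ℕ} :
    0 < spikeCount θ S W τ ↔ ∃ x ∈ S, θ ≤ W x τ := by
  simp [spikeCount, sum_boole, card_pos, filter_nonempty_iff]

variable {W I : ℕ → ℤ}

lemma exists_lt_input_pos_of_spike (hθ : 0 < θ) (hW0 : W 0 < θ)
    (hW : ∀ τ, W (τ + 1) = lifStep θ (W τ) (I τ)) {τ : ℕ} (hτ : θ ≤ W τ) :
    ∃ σ < τ, 0 < I σ := by
  induction τ with
  | zero => omega
  | succ τ ih =>
    by_cases hspike : θ ≤ W τ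
    · obtain ⟨σ, hστ, hσ⟩ := ih hspike
      exact ⟨σ, by omega, hσ⟩
    · rw [hW, lifStep, if_neg hspike, le_max_iff] at hτ
      exact ⟨τ, by omega, by omega⟩

lemma exists_spike_of_input_pos (hW0 : θ - 1 ≤ W 0)
    (hW : ∀ τ, W (τ + 1) = lifStep θ (W τ) (I τ)) (hI : ∀ τ, 0 ≤ I τ) {σ : ℕ} (hσ : 0 < I σ) :
    ∃ τ, θ ≤ W τ := by
  by_contra! hquiet
  have hstep : ∀ τ, W τ + I τ ≤ W (τ + 1) := fun τ => by
    rw [hW, lifStep, if_neg (hquiet τ).not_ge]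
    exact le_max_right _ _
  have hbelow : ∀ τ, θ - 1 ≤ W τ := fun τ => by
    induction τ with
    | zero => exact hW0
    | succ τ ih => linarith [hstep τ, hI τ]
  linarith [hstep σ, hbelow σ, hquiet (σ + 1), Int.add_one_le_of_lt hσ]

end Neuron

section Search

variable {V : Type*} [DecidableEq V] (E : Finset (V × V)) (t : V) {θ : ℤ}
  (VTr : ℕ → ℤ) (VH : V × V → ℕ → ℤ)

lemma reachIn_of_searchNeuron_spike (hθ : 0 < θ) (hH0 : ∀ e ∈ E, VH e 0 = θ - 1)
    (hH : ∀ e ∈ E, ∀ τ, VH e (τ + 1) = lifStep θ (VH e τ)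
      (spikeCount θ (E.filter (·.1 = e.2)) VH τ + if e.2 = t ∧ 1 ≤ VTr τ then 1 else 0))
    (τ : ℕ) : ∀ e ∈ E, θ ≤ VH e τ → ∃ n, reachIn E n e.2 t := by
  induction τ using Nat.strong_induction_on with
  | _ τ ih =>
  intro e he hspike
  obtain ⟨σ, hστ, hinput⟩ :=
    exists_lt_input_pos_of_spike hθ (by rw [hH0 e he]; omega) (hH e he) hspike
  by_cases hsink : e.2 = t
  · exact ⟨0, hsink⟩
  rw [if_neg (fun h => hsink h.1), add_zero, spikeCount_pos_iff] at hinput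
  obtain ⟨e', he', hspike'⟩ := hinput
  obtain ⟨he'E, hadj⟩ := mem_filter.1 he'
  obtain ⟨n, hn⟩ := ih σ hστ e' he'E hspike'
  exact ⟨n + 1, e'.2, hadj ▸ he'E, hn⟩

lemma searchNeuron_spikes_of_reachIn (hTr0 : 1 ≤ VTr 0) (hH0 : ∀ e ∈ E, VH e 0 = θ - 1)
    (hH : ∀ e ∈ E, ∀ τ, VH e (τ + 1) = lifStep θ (VH e τ)
      (spikeCount θ (E.filter (·.1 = e.2)) VH τ + if e.2 = t ∧ 1 ≤ VTr τ then 1 else 0))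
    (n : ℕ) : ∀ e ∈ E, reachIn E n e.2 t → ∃ τ, θ ≤ VH e τ := by
  have hinput : ∀ (e : V × V) τ, 0 ≤ spikeCount θ (E.filter (·.1 = e.2)) VH τ +
      if e.2 = t ∧ 1 ≤ VTr τ then 1 else 0 :=
    fun _ _ => add_nonneg (spikeCount_nonneg _ _ _) (ite_nonneg zero_le_one le_rfl)
  induction n with
  | zero =>
    intro e he (hsink : e.2 = t)
    refine exists_spike_of_input_pos (hH0 e he).ge (hH e he) (hinput e) (σ := 0) ?_
    rw [if_pos ⟨hsink, hTr0⟩]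
    linarith [spikeCount_nonneg (θ := θ) (E.filter (·.1 = e.2)) VH 0]
  | succ n ih =>
    rintro e he ⟨c, hc, hct⟩
    obtain ⟨σ, hσ⟩ := ih (e.2, c) hc hct
    refine exists_spike_of_input_pos (hH0 e he).ge (hH e he) (hinput e) (σ := σ) ?_
    exact add_pos_of_pos_of_nonneg (spikeCount_pos_iff.2 ⟨(e.2, c), mem_filter.2 ⟨hc, rfl⟩, hσ⟩)
      (ite_nonneg zero_le_one le_rfl)

end Search
section Readout

variable {V : Type*} [DecidableEq V] (E : Finset (V × V)) (s : V) {θ : ℤ}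
  (VH VR : V × V → ℕ → ℤ) (hR0 : ∀ e ∈ E, VR e 0 = θ - 1)
  (hR : ∀ e ∈ E, ∀ τ, VR e (τ + 1) = lifStep θ (VR e τ)
    ((if e.1 = s ∧ θ ≤ VH e τ then 1 else 0) + spikeCount θ (E.filter (·.2 = e.1)) VR τ))
include hR0 hR

lemma exists_source_spike_of_readout_spike (hθ : 0 < θ) (τ : ℕ) :
    ∀ e ∈ E, θ ≤ VR e τ → ∃ e₀ ∈ E, e₀.1 = s ∧ ∃ σ, θ ≤ VH e₀ σ := by
  induction τ using Nat.strong_induction_on with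
  | _ τ ih =>
  intro e he hspike
  obtain ⟨σ, hστ, hinput⟩ :=
    exists_lt_input_pos_of_spike hθ (by rw [hR0 e he]; omega) (hR e he) hspike
  by_cases hsource : e.1 = s ∧ θ ≤ VH e σ
  · exact ⟨e, he, hsource.1, σ, hsource.2⟩
  rw [if_neg hsource, zero_add, spikeCount_pos_iff] at hinput
  obtain ⟨e', he', hspike'⟩ := hinput
  exact ih σ hστ e' (mem_filter.1 he').1 hspike'

lemma readout_spikes_of_input_pos {e : V × V} (he : e ∈ E) {σ : ℕ}
    (hσ : 0 < (if e.1 = s ∧ θ ≤ VH e σ then 1 else 0) +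
      spikeCount θ (E.filter (·.2 = e.1)) VR σ) :
    ∃ τ, θ ≤ VR e τ :=
  exists_spike_of_input_pos (hR0 e he).ge (hR e he)
    (fun _ => add_nonneg (ite_nonneg zero_le_one le_rfl) (spikeCount_nonneg _ _ _)) hσ

lemma readout_spikes_of_source {e : V × V} (he : e ∈ E) (hs : e.1 = s) {σ : ℕ}
    (hσ : θ ≤ VH e σ) : ∃ τ, θ ≤ VR e τ := by
  refine readout_spikes_of_input_pos E s VH VR hR0 hR he (σ := σ) ?_
  rw [if_pos ⟨hs, hσ⟩]
  linarith [spikeCount_nonneg (θ := θ) (E.filter (·.2 = e.1)) VR σ]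

lemma exists_readout_spike_of_reachIn (n : ℕ) :
    ∀ e ∈ E, (∃ τ, θ ≤ VR e τ) → ∀ b, reachIn E n e.2 b → ∃ e' ∈ E, e'.2 = b ∧ ∃ τ, θ ≤ VR e' τ := by
  induction n with
  | zero => exact fun e he hspike b (hb : e.2 = b) => ⟨e, he, hb, hspike⟩
  | succ n ih =>
    rintro e he ⟨σ, hσ⟩ b ⟨c, hc, hcb⟩
    refine ih (e.2, c) hc ?_ b hcb
    refine readout_spikes_of_input_pos E s VH VR hR0 hR hc (σ := σ) ?_
    exact add_pos_of_nonneg_of_pos (ite_nonneg zero_le_one le_rfl)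
      (spikeCount_pos_iff.2 ⟨e, mem_filter.2 ⟨he, rfl⟩, hσ⟩)

end Readout

theorem search_readout_correctness_general
    {V : Type*} [DecidableEq V] (E : Finset (V × V)) (s t : V)
    (hst : s ≠ t)
    (VTr : ℕ → ℤ) (VH VR : V × V → ℕ → ℤ)
    (hTr0 : VTr 0 = 1)
    (hH0 : ∀ e ∈ E, VH e 0 = (E.card : ℤ) + 1)
    (hHEvol : ∀ e ∈ E, ∀ τ, VH e (τ + 1) =
      max 0 ((1 : ℤ) * (if (E.card : ℤ) + 2 ≤ VH e τ then (0 : ℤ) else VH e τ) +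
        (∑ e' ∈ E.filter (fun e' => e'.1 = e.2),
          (if (E.card : ℤ) + 2 ≤ VH e' τ then (1 : ℤ) else 0)) +
        (if e.2 = t ∧ (1 : ℤ) ≤ VTr τ then (1 : ℤ) else 0)))
    (hR0 : ∀ e ∈ E, VR e 0 = (E.card : ℤ) + 1)
    (hREvol : ∀ e ∈ E, ∀ τ, VR e (τ + 1) =
      max 0 ((1 : ℤ) * (if (E.card : ℤ) + 2 ≤ VR e τ then (0 : ℤ) else VR e τ) +
        (if e.1 = s ∧ (E.card : ℤ) + 2 ≤ VH e τ then (1 : ℤ) else 0) +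
        (∑ e' ∈ E.filter (fun e' => e'.2 = e.1),
          (if (E.card : ℤ) + 2 ≤ VR e' τ then (1 : ℤ) else 0)))) :
    (∃ e ∈ E, e.2 = t ∧ ∃ τ, (E.card : ℤ) + 2 ≤ VR e τ) ↔
      ∃ n, reachIn E n s t := by
  set θ : ℤ := (E.card : ℤ) + 2
  have hθ : 0 < θ := by positivity
  have hH0' : ∀ e ∈ E, VH e 0 = θ - 1 := fun e he => by rw [hH0 e he]; ring
  have hR0' : ∀ e ∈ E, VR e 0 = θ - 1 := fun e he => by rw [hR0 e he]; ring
  have hH : ∀ e ∈ E, ∀ τ, VH e (τ + 1) = lifStep θ (VH e τ)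
      (spikeCount θ (E.filter (·.1 = e.2)) VH τ + if e.2 = t ∧ 1 ≤ VTr τ then 1 else 0) :=
    fun e he τ => by rw [hHEvol e he τ, lifStep, spikeCount, one_mul, add_assoc]
  have hR : ∀ e ∈ E, ∀ τ, VR e (τ + 1) = lifStep θ (VR e τ)
      ((if e.1 = s ∧ θ ≤ VH e τ then 1 else 0) + spikeCount θ (E.filter (·.2 = e.1)) VR τ) :=
    fun e he τ => by rw [hREvol e he τ, lifStep, spikeCount, one_mul, add_assoc]
  constructor
  · rintro ⟨e, he, -, τ, hspike⟩
    obtain ⟨e₀, he₀, hs, σ, hσ⟩ :=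
      exists_source_spike_of_readout_spike E s VH VR hR0' hR hθ τ e he hspike
    obtain ⟨n, hn⟩ := reachIn_of_searchNeuron_spike E t VTr VH hθ hH0' hH σ e₀ he₀ hσ
    exact ⟨n + 1, e₀.2, hs ▸ he₀, hn⟩
  · rintro ⟨_ | n, hn⟩
    · exact absurd hn hst
    obtain ⟨c, hsc, hct⟩ := hn
    obtain ⟨σ, hσ⟩ := searchNeuron_spikes_of_reachIn E t VTr VH hTr0.ge hH0' hH n (s, c) hsc hct
    exact exists_readout_spike_of_reachIn E s VH VR hR0' hR n (s, c) hsc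
      (readout_spikes_of_source E s VH VR hR0' hR hsc rfl hσ) t hct

/-- In the search network together with the readout network for a finite
directed graph `G = (V, E)` with source `s` and sink `t`, some readout neuron
`R (a, t)` coding an edge into the sink spikes (at some time) iff there exists a
directed path from `s` to `t` in `G`. -/
theorem search_readout_correctness
    {V : Type*} [DecidableEq V] (E : Finset (V × V)) (s t : V)
    (hst : s ≠ t) (hsIn : ∀ e ∈ E, e.2 ≠ s) (htOut : ∀ e ∈ E, e.1 ≠ t)
    (VTr : ℕ → ℤ) (VH VR : V × V → ℕ → ℤ)
    (hTr0 : VTr 0 = 1)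
    (hTrEvol : ∀ τ, VTr (τ + 1) =
      max 0 ((1 : ℤ) * (if (1 : ℤ) ≤ VTr τ then (0 : ℤ) else VTr τ)))
    (hH0 : ∀ e ∈ E, VH e 0 = (E.card : ℤ) + 1)
    (hHEvol : ∀ e ∈ E, ∀ τ, VH e (τ + 1) =
      max 0 ((1 : ℤ) * (if (E.card : ℤ) + 2 ≤ VH e τ then (0 : ℤ) else VH e τ) +
        (∑ e' ∈ E.filter (fun e' => e'.1 = e.2),
          (if (E.card : ℤ) + 2 ≤ VH e' τ then (1 : ℤ) else 0)) +
        (if e.2 = t ∧ (1 : ℤ) ≤ VTr τ then (1 : ℤ) else 0)))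
    (hR0 : ∀ e ∈ E, VR e 0 = (E.card : ℤ) + 1)
    (hREvol : ∀ e ∈ E, ∀ τ, VR e (τ + 1) =
      max 0 ((1 : ℤ) * (if (E.card : ℤ) + 2 ≤ VR e τ then (0 : ℤ) else VR e τ) +
        (if e.1 = s ∧ (E.card : ℤ) + 2 ≤ VH e τ then (1 : ℤ) else 0) +
        (∑ e' ∈ E.filter (fun e' => e'.2 = e.1),
          (if (E.card : ℤ) + 2 ≤ VR e' τ then (1 : ℤ) else 0)))) :
    (∃ e ∈ E, e.2 = t ∧ ∃ τ, (E.card : ℤ) + 2 ≤ VR e τ) ↔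
      ∃ n, reachIn E n s t :=
  search_readout_correctness_general E s t hst VTr VH VR hTr0 hH0 hHEvol hR0 hREvol
end

section
/- Let e_1, …, e_L be the edges, in order from s to t, of a shortest directed s–t path in the finite directed graph G = (V, E) (so L is the minimum number of edges of a directed path from s to t). Then in the search network together with the readout network for G, each readout neuron R_{e_j} (1 ≤ j ≤ L) spikes exactly once, and its spike occurs at time L + j (taking the transmitter's spike at time 0). In particular, the readout neurons along the path spike at consecutive time steps in path order, so the augmenting path can be decoded from the order of spike timings. -/
open Finset

theorem isLeast_setOf_congr {α : Type*} [LinearOrder α] {P Q : α → Prop} {a : α}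
    (h : ∀ x ≤ a, P x ↔ Q x) : IsLeast {x | P x} a ↔ IsLeast {x | Q x} a := by
  have key : ∀ {P Q : α → Prop}, (∀ x ≤ a, P x ↔ Q x) →
      IsLeast {x | P x} a → IsLeast {x | Q x} a := fun h ⟨ha, hlow⟩ =>
    ⟨(h a le_rfl).1 ha, fun x hx =>
      (le_total a x).elim id fun hxa => hlow ((h x hxa).2 hx)⟩
  exact ⟨key h, key fun x hx => (h x hx).symm⟩

theorem Nat.isLeast_setOf_succ_iff {P : ℕ → Prop} (h0 : ¬ P 0) {n : ℕ} :
    IsLeast {m | P m} (n + 1) ↔ IsLeast {m | P (m + 1)} n := by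
  refine ⟨fun ⟨hn, hlow⟩ => ⟨hn, fun m hm => Nat.le_of_succ_le_succ (hlow hm)⟩,
    fun ⟨hn, hlow⟩ => ⟨hn, fun m hm => ?_⟩⟩
  obtain _ | m := m
  · exact absurd hm h0
  · exact Nat.succ_le_succ (hlow hm)

theorem Nat.isLeast_or_exists_isLeast_iff {ι : Type*} {J : Finset ι} {P : ℕ → Prop}
    {Q : ι → ℕ → Prop} {n : ℕ} :
    IsLeast {m | P m ∨ ∃ j ∈ J, IsLeast {k | Q j k} m} n ↔
      IsLeast {m | P m ∨ ∃ j ∈ J, Q j m} n := by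
  classical
  constructor
  · rintro ⟨hn, hlow⟩
    refine ⟨hn.imp_right fun ⟨j, hj, hjn⟩ => ⟨j, hj, hjn.1⟩, ?_⟩
    rintro m (hm | ⟨j, hj, hjm⟩)
    · exact hlow (Or.inl hm)
    · exact (hlow (Or.inr ⟨j, hj, Nat.isLeast_find ⟨m, hjm⟩⟩)).trans (Nat.find_min' _ hjm)
  · rintro ⟨hn, hlow⟩
    refine ⟨hn.imp_right fun ⟨j, hj, hjn⟩ =>
      ⟨j, hj, hjn, fun m hm => hlow (Or.inr ⟨j, hj, hm⟩)⟩, ?_⟩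
    rintro m (hm | ⟨j, hj, hjm⟩)
    · exact hlow (Or.inl hm)
    · exact hlow (Or.inr ⟨j, hj, hjm.1⟩)

theorem Finset.sum_ite_one_zero_le_one {ι : Type*} {s : Finset ι} {p : ι → Prop}
    [DecidablePred p] (hp : ∀ i ∈ s, ∀ j ∈ s, p i → p j → i = j) :
    ∑ i ∈ s, (if p i then (1 : ℤ) else 0) ≤ 1 := by
  rw [sum_boole]
  exact_mod_cast card_le_one.2 fun i hi j hj =>
    hp i (mem_filter.1 hi).1 j (mem_filter.1 hj).1 (mem_filter.1 hi).2 (mem_filter.1 hj).2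

theorem spike_iff_eq_zero_of_no_input {θ : ℤ} {V : ℕ → ℤ} (hθ : 0 < θ) (h0 : θ ≤ V 0)
    (hV : ∀ τ, V (τ + 1) = max 0 (1 * if θ ≤ V τ then 0 else V τ)) (τ : ℕ) :
    θ ≤ V τ ↔ τ = 0 := by
  have hrest : ∀ τ, V (τ + 1) = 0 := by
    intro τ
    induction τ with
    | zero => simp [hV, h0]
    | succ τ ih => rw [hV, ih]; simp
  cases τ with
  | zero => simpa using h0
  | succ τ => simpa [hrest] using hθ

section PrimedNeuron

variable {θ : ℤ} {V I : ℕ → ℤ} (hθ : 1 ≤ θ) (hI : ∀ σ, 0 ≤ I σ) (hV0 : V 0 = θ - 1)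
  (hV : ∀ σ, V (σ + 1) = max 0 ((if θ ≤ V σ then 0 else V σ) + I σ))
include hθ hI hV0 hV

/-- After its spike the neuron restarts from `0`, so from then on its potential is at most the
input received since the spike, which is less than the total input. -/
theorem primed_potential_succ {τ : ℕ} (hA : ∑ σ ∈ range (τ + 1), I σ ≤ θ) :
    (∑ σ ∈ range τ, I σ = 0 → V (τ + 1) = θ - 1 + I τ) ∧
      (0 < ∑ σ ∈ range τ, I σ → V (τ + 1) < ∑ σ ∈ range (τ + 1), I σ) := by
  induction τ with
  | zero =>
    refine ⟨fun _ => ?_, fun h => by simp at h⟩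
    rw [hV, hV0, if_neg (by omega)]
    have := hI 0
    omega
  | succ τ ih =>
    have hIτ := hI τ; have hIτ' := hI (τ + 1)
    have hAτ : 0 ≤ ∑ σ ∈ range τ, I σ := sum_nonneg fun σ _ => hI σ
    simp only [sum_range_succ] at hA ih ⊢
    obtain ⟨ih₁, ih₂⟩ := ih (by linarith)
    rcases hAτ.eq_or_lt with h | h
    · rw [hV, ih₁ h.symm]
      rcases (hI τ).eq_or_lt with h' | h'
      · refine ⟨fun _ => ?_, fun _ => by omega⟩
        rw [if_neg (by omega)]
        omega
      · refine ⟨fun _ => by omega, fun _ => ?_⟩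
        rw [if_pos (by omega)]
        omega
    · have hlt := ih₂ h
      refine ⟨fun _ => by omega, fun _ => ?_⟩
      rw [hV, if_neg (by omega)]
      omega

theorem primed_spike_succ_iff {τ : ℕ} (hA : ∑ σ ∈ range (τ + 1), I σ ≤ θ) :
    θ ≤ V (τ + 1) ↔ IsLeast {σ | 0 < I σ} τ := by
  obtain ⟨h₁, h₂⟩ := primed_potential_succ hθ hI hV0 hV hA
  have hfirst : IsLeast {σ | 0 < I σ} τ ↔ 0 < I τ ∧ ∑ σ ∈ range τ, I σ = 0 := by
    rw [sum_eq_zero_iff_of_nonneg fun σ _ => hI σ]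
    refine and_congr_right fun _ => ⟨fun h σ hσ => ?_, fun h σ hσ => ?_⟩
    · by_contra hne
      exact absurd (h (lt_of_le_of_ne (hI σ) (Ne.symm hne))) (by simpa using hσ)
    · by_contra hlt
      exact absurd (h σ (mem_range.2 (not_le.1 hlt))) hσ.ne'
  rw [hfirst]
  have hAτ : 0 ≤ ∑ σ ∈ range τ, I σ := sum_nonneg fun σ _ => hI σ
  rw [sum_range_succ] at hA h₂
  rcases hAτ.eq_or_lt with h | h
  · rw [h₁ h.symm]; omega
  · have := h₂ h; omega

end PrimedNeuron

/-- `arrivesAt pre ext i τ`: a chain of spikes, started by an external input `ext` and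
passed on with one tick of delay along `pre`, arrives at neuron `i` at time `τ`. -/
def arrivesAt {ι : Type*} (pre : ι → Finset ι) (ext : ι → ℕ → Prop) : ι → ℕ → Prop
  | _, 0 => False
  | i, τ + 1 => ext i τ ∨ ∃ j ∈ pre i, arrivesAt pre ext j τ

theorem arrivesAt_zero {ι : Type*} (pre : ι → Finset ι) (ext : ι → ℕ → Prop) (i : ι) :
    ¬ arrivesAt pre ext i 0 := id

theorem arrivesAt_succ {ι : Type*} (pre : ι → Finset ι) (ext : ι → ℕ → Prop) (i : ι) (τ : ℕ) :
    arrivesAt pre ext i (τ + 1) ↔ ext i τ ∨ ∃ j ∈ pre i, arrivesAt pre ext j τ := Iff.rfl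

theorem sum_ite_add_ite_pos_iff {ι : Type*} {s : Finset ι} {p : ι → Prop} [DecidablePred p]
    {q : Prop} [Decidable q] :
    0 < (∑ i ∈ s, if p i then (1 : ℤ) else 0) + (if q then 1 else 0) ↔ q ∨ ∃ i ∈ s, p i := by
  rw [sum_boole]
  have hcard : (0 : ℤ) < (s.filter p).card ↔ ∃ i ∈ s, p i := by
    rw [Nat.cast_pos, card_pos, filter_nonempty_iff]
  split_ifs with hq
  · simp only [hq, true_or, iff_true]; positivity
  · simpa [hq] using hcard

theorem sum_range_spike_input_le {ι : Type*} {P : Finset ι} {spike : ι → ℕ → Prop}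
    [∀ j σ, Decidable (spike j σ)] {ext : ℕ → Prop} [DecidablePred ext] {n : ℕ}
    (hspike : ∀ j ∈ P, ∀ σ < n, ∀ σ' < n, spike j σ → spike j σ' → σ = σ')
    (hext : ∀ σ σ', ext σ → ext σ' → σ = σ') :
    ∑ σ ∈ range n, ((∑ j ∈ P, if spike j σ then (1 : ℤ) else 0) + if ext σ then 1 else 0) ≤
      P.card + 1 := by
  rw [sum_add_distrib, sum_comm]
  refine add_le_add ((sum_le_sum fun j hj => sum_ite_one_zero_le_one ?_).trans_eq (by simp))
    (sum_ite_one_zero_le_one fun σ _ σ' _ => hext σ σ')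
  exact fun σ hσ σ' hσ' => hspike j hj σ (mem_range.1 hσ) σ' (mem_range.1 hσ')

/-- By induction on time every neuron of `S` has spiked at most once so far, so each neuron has
received at most `S.card + 1 ≤ θ` unit inputs and `primed_spike_succ_iff` applies. -/
theorem layer_spike_iff {ι : Type*} {S : Finset ι} {pre : ι → Finset ι} {ext : ι → ℕ → Prop}
    [∀ i τ, Decidable (ext i τ)] {θ : ℤ} {V : ι → ℕ → ℤ}
    (hpre : ∀ i ∈ S, pre i ⊆ S) (hθ : (S.card : ℤ) + 1 ≤ θ)
    (hext : ∀ i ∈ S, ∀ σ σ', ext i σ → ext i σ' → σ = σ')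
    (hV0 : ∀ i ∈ S, V i 0 = θ - 1)
    (hV : ∀ i ∈ S, ∀ σ, V i (σ + 1) = max 0 ((if θ ≤ V i σ then 0 else V i σ) +
      ((∑ j ∈ pre i, if θ ≤ V j σ then 1 else 0) + if ext i σ then 1 else 0)))
    (τ : ℕ) : ∀ i ∈ S, θ ≤ V i τ ↔ IsLeast {σ | arrivesAt pre ext i σ} τ := by
  induction τ using Nat.strong_induction_on with
  | _ τ ih =>
  intro i hi
  obtain _ | τ := τ
  · rw [hV0 i hi]
    exact iff_of_false (by omega) fun h => arrivesAt_zero pre ext i h.1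
  set I : ℕ → ℤ := fun σ => (∑ j ∈ pre i, if θ ≤ V j σ then 1 else 0) + if ext i σ then 1 else 0
  have hI : ∀ σ, 0 ≤ I σ := fun σ => by positivity
  have hinput : ∀ σ ≤ τ, 0 < I σ ↔ ext i σ ∨ ∃ j ∈ pre i, IsLeast {σ | arrivesAt pre ext j σ} σ :=
    fun σ hσ => sum_ite_add_ite_pos_iff.trans <| or_congr_right <| exists_congr fun j =>
      and_congr_right fun hj => ih σ (by omega) j (hpre i hi hj)
  have hA : ∑ σ ∈ range (τ + 1), I σ ≤ θ := by
    refine (sum_range_spike_input_le (fun j hj σ hσ σ' hσ' h h' => ?_) (hext i hi)).trans ?_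
    · exact ((ih σ hσ j (hpre i hi hj)).1 h).unique ((ih σ' hσ' j (hpre i hi hj)).1 h')
    · have := card_le_card (hpre i hi); omega
  rw [primed_spike_succ_iff (by omega) hI (hV0 i hi) (hV i hi) hA, isLeast_setOf_congr hinput,
    Nat.isLeast_or_exists_isLeast_iff, Nat.isLeast_setOf_succ_iff (arrivesAt_zero pre ext i)]
  rfl

section Walks

variable {V : Type*} {E : Finset (V × V)}

theorem reachIn_add {a b c : V} {m n : ℕ} (hab : reachIn E m a b) (hbc : reachIn E n b c) :
    reachIn E (m + n) a c := by
  induction m generalizing a with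
  | zero => cases hab; simpa using hbc
  | succ m ih =>
    obtain ⟨d, had, hdb⟩ := hab
    rw [Nat.add_right_comm]
    exact ⟨d, had, ih hdb⟩

theorem reachIn_of_path {v : ℕ → V} {n : ℕ} (hv : ∀ j < n, (v j, v (j + 1)) ∈ E) {i : ℕ}
    (hi : i ≤ n) : reachIn E (n - i) (v i) (v n) := by
  obtain ⟨k, rfl⟩ := Nat.exists_eq_add_of_le hi
  rw [Nat.add_sub_cancel_left]
  induction k generalizing i with
  | zero => rfl
  | succ k ih =>
    refine ⟨v (i + 1), hv i (by omega), ?_⟩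
    rw [← Nat.add_assoc, Nat.add_right_comm]
    exact ih (fun j hj => hv j (by omega)) (by omega)

variable [DecidableEq V]

def edgesAfter (E : Finset (V × V)) (e : V × V) : Finset (V × V) := E.filter (·.1 = e.2)

def edgesBefore (E : Finset (V × V)) (e : V × V) : Finset (V × V) := E.filter (·.2 = e.1)

variable {s t : V} {L : ℕ} {v : ℕ → V} {ext : V × V → ℕ → Prop}

theorem arrivesAt_edgesAfter_succ_iff (hext : ∀ e σ, ext e σ ↔ e.2 = t ∧ σ = 0) (e : V × V)
    (n : ℕ) : arrivesAt (edgesAfter E) ext e (n + 1) ↔ reachIn E n e.2 t := by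
  induction n generalizing e with
  | zero => simp [arrivesAt_succ, arrivesAt_zero, hext, reachIn]
  | succ n ih =>
    simp only [arrivesAt_succ (τ := n + 1), hext, ih, edgesAfter, mem_filter]
    constructor
    · rintro (⟨-, h⟩ | ⟨⟨a, c⟩, ⟨hac, rfl⟩, hc⟩)
      · omega
      · exact ⟨c, hac, hc⟩
    · rintro ⟨c, hc, hct⟩
      exact Or.inr ⟨(e.2, c), ⟨hc, rfl⟩, hct⟩

theorem le_of_arrivesAt_edgesAfter (hext : ∀ e σ, ext e σ ↔ e.2 = t ∧ σ = 0)
    (hshortest : ∀ n, reachIn E n s t → L ≤ n) {e : V × V} (he : e ∈ E) (hs : e.1 = s)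
    {σ : ℕ} (h : arrivesAt (edgesAfter E) ext e σ) : L ≤ σ := by
  obtain ⟨a, b⟩ := e
  obtain _ | σ := σ
  · exact absurd h (arrivesAt_zero _ _ _)
  · exact hshortest _ ⟨b, hs ▸ he, (arrivesAt_edgesAfter_succ_iff hext _ σ).1 h⟩

theorem isLeast_arrivesAt_edgesAfter_path (hext : ∀ e σ, ext e σ ↔ e.2 = t ∧ σ = 0)
    (hv : ∀ j < L, (v j, v (j + 1)) ∈ E) (hv0 : v 0 = s) (hvL : v L = t)
    (hshortest : ∀ n, reachIn E n s t → L ≤ n) (hL : 0 < L) :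
    IsLeast {σ | arrivesAt (edgesAfter E) ext (v 0, v 1) σ} L := by
  refine ⟨?_, fun σ => le_of_arrivesAt_edgesAfter hext hshortest (hv 0 hL) hv0⟩
  obtain ⟨n, rfl⟩ : ∃ n, L = n + 1 := ⟨L - 1, by omega⟩
  refine (arrivesAt_edgesAfter_succ_iff hext _ n).2 ?_
  simpa [hvL] using reachIn_of_path hv (i := 1) (by omega)

theorem arrivesAt_edgesBefore_path {τ : ℕ} (hv : ∀ j < L, (v j, v (j + 1)) ∈ E)
    (hτ : ext (v 0, v 1) τ) {j : ℕ} (hj : j < L) :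
    arrivesAt (edgesBefore E) ext (v j, v (j + 1)) (τ + (j + 1)) := by
  induction j with
  | zero => exact Or.inl hτ
  | succ j ih =>
    exact Or.inr ⟨(v j, v (j + 1)), mem_filter.2 ⟨hv j (by omega), rfl⟩, ih (by omega)⟩

theorem exists_reachIn_of_arrivesAt_edgesBefore {τ₀ : ℕ}
    (hext : ∀ e ∈ E, ∀ σ, ext e σ → e.1 = s ∧ τ₀ ≤ σ) {τ : ℕ} :
    ∀ e ∈ E, arrivesAt (edgesBefore E) ext e τ → ∃ k, reachIn E k s e.1 ∧ τ₀ + k + 1 ≤ τ := by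
  induction τ with
  | zero => exact fun e _ h => absurd h (arrivesAt_zero _ _ e)
  | succ τ ih =>
    rintro e he (h | ⟨e', he', h⟩)
    · obtain ⟨hs, hτ⟩ := hext e he τ h
      exact ⟨0, hs.symm, by omega⟩
    · obtain ⟨he'E, he'e⟩ := mem_filter.1 he'
      obtain ⟨k, hk, hkτ⟩ := ih e' he'E h
      exact ⟨k + 1, reachIn_add hk ⟨e.1, he'e ▸ he'E, rfl⟩, by omega⟩

/-- No walk from `s` brings the wave to a path edge earlier: it would extend to an `s`–`t` walk
shorter than `L`. -/
theorem isLeast_arrivesAt_edgesBefore_path (hv : ∀ j < L, (v j, v (j + 1)) ∈ E)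
    (hvL : v L = t) (hshortest : ∀ n, reachIn E n s t → L ≤ n)
    (hext : ∀ e ∈ E, ∀ σ, ext e σ → e.1 = s ∧ L ≤ σ) (h0 : ext (v 0, v 1) L) {j : ℕ}
    (hj : j < L) :
    IsLeast {σ | arrivesAt (edgesBefore E) ext (v j, v (j + 1)) σ} (L + (j + 1)) := by
  refine ⟨arrivesAt_edgesBefore_path hv h0 hj, fun σ hσ => ?_⟩
  obtain ⟨k, hk, hkσ⟩ := exists_reachIn_of_arrivesAt_edgesBefore hext _ (hv j hj) hσ
  have := hshortest _ (reachIn_add hk (hvL ▸ reachIn_of_path hv hj.le))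
  omega

end Walks

theorem shortest_path_readout_timing_general
    {V : Type*} [DecidableEq V] (E : Finset (V × V)) (s t : V)
    (L : ℕ) (v : ℕ → V)
    (hv0 : v 0 = s) (hvL : v L = t)
    (hvE : ∀ j, j < L → (v j, v (j + 1)) ∈ E)
    (hshortest : ∀ n, reachIn E n s t → L ≤ n)
    (VTr : ℕ → ℤ) (VH VR : V × V → ℕ → ℤ)
    (hTr0 : VTr 0 = 1)
    (hTrEvol : ∀ τ, VTr (τ + 1) =
      max 0 ((1 : ℤ) * (if (1 : ℤ) ≤ VTr τ then (0 : ℤ) else VTr τ)))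
    (hH0 : ∀ e ∈ E, VH e 0 = (E.card : ℤ) + 1)
    (hHEvol : ∀ e ∈ E, ∀ τ, VH e (τ + 1) =
      max 0 ((1 : ℤ) * (if (E.card : ℤ) + 2 ≤ VH e τ then (0 : ℤ) else VH e τ) +
        (∑ e' ∈ E.filter (fun e' => e'.1 = e.2),
          (if (E.card : ℤ) + 2 ≤ VH e' τ then (1 : ℤ) else 0)) +
        (if e.2 = t ∧ (1 : ℤ) ≤ VTr τ then (1 : ℤ) else 0)))
    (hR0 : ∀ e ∈ E, VR e 0 = (E.card : ℤ) + 1)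
    (hREvol : ∀ e ∈ E, ∀ τ, VR e (τ + 1) =
      max 0 ((1 : ℤ) * (if (E.card : ℤ) + 2 ≤ VR e τ then (0 : ℤ) else VR e τ) +
        (if e.1 = s ∧ (E.card : ℤ) + 2 ≤ VH e τ then (1 : ℤ) else 0) +
        (∑ e' ∈ E.filter (fun e' => e'.2 = e.1),
          (if (E.card : ℤ) + 2 ≤ VR e' τ then (1 : ℤ) else 0)))) :
    ∀ j, j < L →
      ∀ τ, ((E.card : ℤ) + 2 ≤ VR (v j, v (j + 1)) τ ↔ τ = L + (j + 1)) := by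
  intro j hj τ
  have hTrext : ∀ (e : V × V) σ, (e.2 = t ∧ 1 ≤ VTr σ) ↔ e.2 = t ∧ σ = 0 :=
    fun _ σ => and_congr_right' (spike_iff_eq_zero_of_no_input one_pos hTr0.ge hTrEvol σ)
  have hH := layer_spike_iff (V := VH) (pre := edgesAfter E) (θ := (E.card : ℤ) + 2)
    (fun _ _ => filter_subset _ E) (by omega)
    (fun e _ σ σ' h h' => ((hTrext e σ).1 h).2.trans ((hTrext e σ').1 h').2.symm)
    (fun e he => by rw [hH0 e he]; ring)
    (fun e he σ => by rw [hHEvol e he σ, one_mul, add_assoc]; rfl)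
  have hR := layer_spike_iff (V := VR) (pre := edgesBefore E) (θ := (E.card : ℤ) + 2)
    (ext := fun e σ => e.1 = s ∧ (E.card : ℤ) + 2 ≤ VH e σ)
    (fun _ _ => filter_subset _ E) (by omega)
    (fun e he σ σ' h h' => ((hH σ e he).1 h.2).unique ((hH σ' e he).1 h'.2))
    (fun e he => by rw [hR0 e he]; ring) (fun e he σ => by rw [hREvol e he σ, one_mul]; ac_rfl)
  have hfirst := isLeast_arrivesAt_edgesBefore_path hvE hvL hshortest
    (ext := fun e σ => e.1 = s ∧ (E.card : ℤ) + 2 ≤ VH e σ)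
    (fun e he σ h =>
      ⟨h.1, le_of_arrivesAt_edgesAfter hTrext hshortest he h.1 ((hH σ e he).1 h.2).1⟩)
    ⟨hv0, (hH L _ (hvE 0 (by omega))).2
      (isLeast_arrivesAt_edgesAfter_path hTrext hvE hv0 hvL hshortest (by omega))⟩ hj
  rw [hR τ _ (hvE j hj)]
  exact ⟨fun h => h.unique hfirst, fun h => h ▸ hfirst⟩

/-- Let `e_1, …, e_L` be the consecutive edges (given by the vertex
sequence `v 0 = s, v 1, …, v L = t`, with `e_j = (v (j-1), v j)`) of a shortest
directed `s`–`t` path in `G = (V, E)`.  Then in the search network together with the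
readout network for `G`, each readout neuron `R e_j` spikes exactly once, namely at
time `L + j` (taking the transmitter's spike at time `0`); so the readout neurons
along the path spike at consecutive time steps in path order. -/
theorem shortest_path_readout_timing
    {V : Type*} [DecidableEq V] (E : Finset (V × V)) (s t : V)
    (hst : s ≠ t) (hsIn : ∀ e ∈ E, e.2 ≠ s) (htOut : ∀ e ∈ E, e.1 ≠ t)
    (L : ℕ) (v : ℕ → V)
    (hv0 : v 0 = s) (hvL : v L = t)
    (hvE : ∀ j, j < L → (v j, v (j + 1)) ∈ E)
    (hshortest : ∀ n, reachIn E n s t → L ≤ n)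
    (VTr : ℕ → ℤ) (VH VR : V × V → ℕ → ℤ)
    (hTr0 : VTr 0 = 1)
    (hTrEvol : ∀ τ, VTr (τ + 1) =
      max 0 ((1 : ℤ) * (if (1 : ℤ) ≤ VTr τ then (0 : ℤ) else VTr τ)))
    (hH0 : ∀ e ∈ E, VH e 0 = (E.card : ℤ) + 1)
    (hHEvol : ∀ e ∈ E, ∀ τ, VH e (τ + 1) =
      max 0 ((1 : ℤ) * (if (E.card : ℤ) + 2 ≤ VH e τ then (0 : ℤ) else VH e τ) +
        (∑ e' ∈ E.filter (fun e' => e'.1 = e.2),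
          (if (E.card : ℤ) + 2 ≤ VH e' τ then (1 : ℤ) else 0)) +
        (if e.2 = t ∧ (1 : ℤ) ≤ VTr τ then (1 : ℤ) else 0)))
    (hR0 : ∀ e ∈ E, VR e 0 = (E.card : ℤ) + 1)
    (hREvol : ∀ e ∈ E, ∀ τ, VR e (τ + 1) =
      max 0 ((1 : ℤ) * (if (E.card : ℤ) + 2 ≤ VR e τ then (0 : ℤ) else VR e τ) +
        (if e.1 = s ∧ (E.card : ℤ) + 2 ≤ VH e τ then (1 : ℤ) else 0) +
        (∑ e' ∈ E.filter (fun e' => e'.2 = e.1),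
          (if (E.card : ℤ) + 2 ≤ VR e' τ then (1 : ℤ) else 0)))) :
    ∀ j, j < L →
      ∀ τ, ((E.card : ℤ) + 2 ≤ VR (v j, v (j + 1)) τ ↔ τ = L + (j + 1)) :=
  shortest_path_readout_timing_general E s t L v hv0 hvL hvE hshortest VTr VH VR hTr0 hTrEvol hH0
    hHEvol hR0 hREvol
end

section
/- In the search network together with the readout network for a finite directed graph G = (V, E), every spike of every neuron occurs at a time step at most 2|E| + 1 (taking the transmitter's spike at time 0). Hence after 2|E| + 1 time steps the computation can be terminated: if no readout neuron coding an edge into the sink has spiked by then, none ever will. (This establishes the O(n) time bound of the neuromorphic oracle query.) -/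
/-- Number of spikes (threshold crossings) of potential `W` with threshold `θ`
at times strictly before `τ`. -/
def spikeCnt (W : ℕ → ℤ) (θ : ℤ) (τ : ℕ) : ℕ :=
  ((Finset.range τ).filter (fun σ => θ ≤ W σ)).card

lemma spikeCnt_succ (W : ℕ → ℤ) (θ : ℤ) (τ : ℕ) :
    spikeCnt W θ (τ + 1) = spikeCnt W θ τ + (if θ ≤ W τ then 1 else 0) := by
  unfold spikeCnt
  rw [Finset.range_add_one, Finset.filter_insert]
  split
  · rw [Finset.card_insert_of_notMem (by simp)]
  · simp

lemma spikeCnt_as_sum (W : ℕ → ℤ) (θ : ℤ) (τ : ℕ) :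
    ((spikeCnt W θ τ : ℤ)) = ∑ σ ∈ Finset.range τ, (if θ ≤ W σ then (1 : ℤ) else 0) := by
  simp [spikeCnt, Finset.sum_boole]

lemma two_le_spikeCnt (W : ℕ → ℤ) (θ : ℤ) {σ τ : ℕ} (h : σ < τ)
    (h1 : θ ≤ W σ) (h2 : θ ≤ W τ) : 2 ≤ spikeCnt W θ (τ + 1) := by
  have hsub : ({σ, τ} : Finset ℕ) ⊆ (Finset.range (τ + 1)).filter (fun σ => θ ≤ W σ) := by
    intro x hx
    simp only [Finset.mem_insert, Finset.mem_singleton] at hx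
    rcases hx with rfl | rfl <;> simp [Finset.mem_filter, Finset.mem_range] <;> omega
  calc 2 = ({σ, τ} : Finset ℕ).card := (Finset.card_pair h.ne).symm
  _ ≤ _ := Finset.card_le_card hsub

lemma neuron_inv (W I : ℕ → ℤ) (θ c : ℤ)
    (hnn : ∀ τ, 0 ≤ W τ) (hI : ∀ τ, 0 ≤ I τ) (h0 : W 0 = c)
    (hEvol : ∀ τ, W (τ + 1) = max 0 ((if θ ≤ W τ then 0 else W τ) + I τ)) :
    ∀ τ, W τ + θ * spikeCnt W θ τ ≤ c + ∑ σ ∈ Finset.range τ, I σ := by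
  intro τ
  induction τ with
  | zero => simp [spikeCnt, h0]
  | succ τ ih =>
    rw [spikeCnt_succ, Finset.sum_range_succ, hEvol τ]
    by_cases h : θ ≤ W τ
    · simp only [if_pos h]
      rw [zero_add, max_eq_right (hI τ)]
      push_cast
      rw [mul_add, mul_one]
      linarith
    · simp only [if_neg h]
      rw [max_eq_right (add_nonneg (hnn τ) (hI τ))]
      push_cast
      linarith

lemma card_times_le {α : Type*} [DecidableEq α] (E : Finset α) (P : α → ℕ → Prop)
    (S : Finset ℕ) (d : α)
    (hex : ∀ σ ∈ S, ∃ e ∈ E, P e σ)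
    (honce : ∀ e ∈ E, ∀ σ ∈ S, ∀ τ ∈ S, P e σ → P e τ → σ = τ) :
    S.card ≤ E.card := by
  classical
  set f : ℕ → α := fun σ => if h : ∃ e ∈ E, P e σ then h.choose else d with hf
  have hmem : ∀ σ ∈ S, f σ ∈ E := by
    intro σ hσ
    have h := hex σ hσ
    simp only [hf, dif_pos h]
    exact h.choose_spec.1
  have hP : ∀ σ ∈ S, P (f σ) σ := by
    intro σ hσ
    have h := hex σ hσ
    simp only [hf, dif_pos h]
    exact h.choose_spec.2
  apply Finset.card_le_card_of_injOn f hmem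
  intro σ hσ τ hτ hfe
  simp only [Finset.mem_coe] at hσ hτ
  have h2 : P (f σ) τ := by rw [hfe]; exact hP τ hτ
  exact honce (f σ) (hmem σ hσ) σ hσ τ hτ (hP σ hσ) h2

/-- In the search network together with the readout network for a finite
directed graph `G = (V, E)`, every spike of every neuron occurs at a time step at most
`2|E| + 1` (taking the transmitter's spike at time `0`).  Hence if no readout neuron
coding an edge into the sink has spiked by time `2|E| + 1`, none ever will. -/
theorem search_readout_time_bound
    {V : Type*} [DecidableEq V] (E : Finset (V × V)) (s t : V)
    (hst : s ≠ t) (hsIn : ∀ e ∈ E, e.2 ≠ s) (htOut : ∀ e ∈ E, e.1 ≠ t)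
    (VTr : ℕ → ℤ) (VH VR : V × V → ℕ → ℤ)
    (hTr0 : VTr 0 = 1)
    (hTrEvol : ∀ τ, VTr (τ + 1) =
      max 0 ((1 : ℤ) * (if (1 : ℤ) ≤ VTr τ then (0 : ℤ) else VTr τ)))
    (hH0 : ∀ e ∈ E, VH e 0 = (E.card : ℤ) + 1)
    (hHEvol : ∀ e ∈ E, ∀ τ, VH e (τ + 1) =
      max 0 ((1 : ℤ) * (if (E.card : ℤ) + 2 ≤ VH e τ then (0 : ℤ) else VH e τ) +
        (∑ e' ∈ E.filter (fun e' => e'.1 = e.2),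
          (if (E.card : ℤ) + 2 ≤ VH e' τ then (1 : ℤ) else 0)) +
        (if e.2 = t ∧ (1 : ℤ) ≤ VTr τ then (1 : ℤ) else 0)))
    (hR0 : ∀ e ∈ E, VR e 0 = (E.card : ℤ) + 1)
    (hREvol : ∀ e ∈ E, ∀ τ, VR e (τ + 1) =
      max 0 ((1 : ℤ) * (if (E.card : ℤ) + 2 ≤ VR e τ then (0 : ℤ) else VR e τ) +
        (if e.1 = s ∧ (E.card : ℤ) + 2 ≤ VH e τ then (1 : ℤ) else 0) +
        (∑ e' ∈ E.filter (fun e' => e'.2 = e.1),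
          (if (E.card : ℤ) + 2 ≤ VR e' τ then (1 : ℤ) else 0)))) :
    ((∀ τ, (1 : ℤ) ≤ VTr τ → τ ≤ 2 * E.card + 1) ∧
      (∀ e ∈ E, ∀ τ, (E.card : ℤ) + 2 ≤ VH e τ → τ ≤ 2 * E.card + 1) ∧
      (∀ e ∈ E, ∀ τ, (E.card : ℤ) + 2 ≤ VR e τ → τ ≤ 2 * E.card + 1)) ∧
    ((∀ e ∈ E, e.2 = t → ∀ τ ≤ 2 * E.card + 1, ¬ (E.card : ℤ) + 2 ≤ VR e τ) →
      ∀ e ∈ E, e.2 = t → ∀ τ, ¬ (E.card : ℤ) + 2 ≤ VR e τ) := by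

  classical
  set θ : ℤ := (E.card : ℤ) + 2 with hθ
  -- transmitter spikes only at time 0
  have hTrZ : ∀ τ, VTr (τ + 1) = 0 := by
    intro τ
    induction τ with
    | zero => rw [hTrEvol 0, hTr0]; norm_num
    | succ τ ih => rw [hTrEvol (τ + 1), ih]; norm_num
  have hTrSpike : ∀ τ, (1 : ℤ) ≤ VTr τ → τ = 0 := by
    intro τ h
    cases τ with
    | zero => rfl
    | succ τ => rw [hTrZ τ] at h; omega
  -- nonnegativity
  have hHnn : ∀ e ∈ E, ∀ τ, 0 ≤ VH e τ := by
    intro e he τ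
    cases τ with
    | zero => rw [hH0 e he]; positivity
    | succ τ => rw [hHEvol e he τ]; exact le_max_left _ _
  have hRnn : ∀ e ∈ E, ∀ τ, 0 ≤ VR e τ := by
    intro e he τ
    cases τ with
    | zero => rw [hR0 e he]; positivity
    | succ τ => rw [hREvol e he τ]; exact le_max_left _ _
  -- invariants
  have invH : ∀ e ∈ E, ∀ τ, VH e τ + θ * spikeCnt (VH e) θ τ ≤ ((E.card : ℤ) + 1) +
      ∑ σ ∈ Finset.range τ,
        ((∑ e' ∈ E.filter (fun e' => e'.1 = e.2), (if θ ≤ VH e' σ then (1 : ℤ) else 0)) +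
          (if e.2 = t ∧ (1 : ℤ) ≤ VTr σ then (1 : ℤ) else 0)) := by
    intro e he
    apply neuron_inv _ _ _ _ (hHnn e he) ?_ (hH0 e he)
    · intro τ
      rw [hHEvol e he τ, one_mul, add_assoc]
    · intro σ
      have h1 : (0:ℤ) ≤ ∑ e' ∈ E.filter (fun e' => e'.1 = e.2),
          (if θ ≤ VH e' σ then (1 : ℤ) else 0) :=
        Finset.sum_nonneg fun _ _ => by positivity
      have h2 : (0:ℤ) ≤ (if e.2 = t ∧ (1 : ℤ) ≤ VTr σ then (1 : ℤ) else 0) := by positivity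
      linarith
  have invR : ∀ e ∈ E, ∀ τ, VR e τ + θ * spikeCnt (VR e) θ τ ≤ ((E.card : ℤ) + 1) +
      ∑ σ ∈ Finset.range τ,
        ((if e.1 = s ∧ θ ≤ VH e σ then (1 : ℤ) else 0) +
          (∑ e' ∈ E.filter (fun e' => e'.2 = e.1), (if θ ≤ VR e' σ then (1 : ℤ) else 0))) := by
    intro e he
    apply neuron_inv _ _ _ _ (hRnn e he) ?_ (hR0 e he)
    · intro τ
      rw [hREvol e he τ, one_mul, add_assoc]
    · intro σ
      have h1 : (0:ℤ) ≤ ∑ e' ∈ E.filter (fun e' => e'.2 = e.1),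
          (if θ ≤ VR e' σ then (1 : ℤ) else 0) :=
        Finset.sum_nonneg fun _ _ => by positivity
      have h2 : (0:ℤ) ≤ (if e.1 = s ∧ θ ≤ VH e σ then (1 : ℤ) else 0) := by positivity
      linarith

  -- each H neuron spikes at most once
  have amoH : ∀ τ, ∀ e ∈ E, spikeCnt (VH e) θ τ ≤ 1 := by
    intro τ
    induction τ with
    | zero => intro e he; simp [spikeCnt]
    | succ τ ih =>
      intro e he
      rw [spikeCnt_succ]
      by_cases hsp : θ ≤ VH e τ
      · rw [if_pos hsp]
        rcases Nat.eq_zero_or_pos (spikeCnt (VH e) θ τ) with h0 | h1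
        · omega
        · exfalso
          have hinv := invH e he τ
          have hinc : ∑ σ ∈ Finset.range τ,
              ((∑ e' ∈ E.filter (fun e' => e'.1 = e.2), (if θ ≤ VH e' σ then (1 : ℤ) else 0)) +
                (if e.2 = t ∧ (1 : ℤ) ≤ VTr σ then (1 : ℤ) else 0)) ≤ (E.card : ℤ) := by
            rw [Finset.sum_add_distrib]
            have hcard1 : (1:ℤ) ≤ (E.card : ℤ) := by
              exact_mod_cast Finset.card_pos.mpr ⟨e, he⟩
            by_cases het : e.2 = t
            · have hempty : E.filter (fun e' => e'.1 = e.2) = ∅ := by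
                apply Finset.filter_eq_empty_iff.mpr
                intro e' he'
                rw [het]
                exact htOut e' he'
              have hA : ∑ σ ∈ Finset.range τ,
                  (∑ e' ∈ E.filter (fun e' => e'.1 = e.2),
                    (if θ ≤ VH e' σ then (1 : ℤ) else 0)) = 0 := by
                simp [hempty]
              have hB : ∑ σ ∈ Finset.range τ,
                  (if e.2 = t ∧ (1 : ℤ) ≤ VTr σ then (1 : ℤ) else 0) ≤ 1 := by
                calc ∑ σ ∈ Finset.range τ, (if e.2 = t ∧ (1 : ℤ) ≤ VTr σ then (1 : ℤ) else 0)
                    ≤ ∑ σ ∈ Finset.range τ, (if σ = 0 then (1:ℤ) else 0) := by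
                      apply Finset.sum_le_sum
                      intro σ hσ
                      by_cases h0 : σ = 0
                      · simp only [if_pos h0]; split <;> norm_num
                      · obtain ⟨σ', rfl⟩ := Nat.exists_eq_succ_of_ne_zero h0
                        rw [if_neg h0, if_neg]
                        rintro ⟨-, hv⟩
                        rw [hTrZ σ'] at hv
                        omega
                  _ ≤ 1 := by
                      rw [Finset.sum_ite_eq' (Finset.range τ) 0 (fun _ => (1:ℤ))]
                      split <;> norm_num
              linarith
            · have hB : ∑ σ ∈ Finset.range τ,
                  (if e.2 = t ∧ (1 : ℤ) ≤ VTr σ then (1 : ℤ) else 0) = 0 := by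
                apply Finset.sum_eq_zero
                intro σ hσ
                rw [if_neg]
                rintro ⟨h, -⟩
                exact het h
              have hA : ∑ σ ∈ Finset.range τ,
                  (∑ e' ∈ E.filter (fun e' => e'.1 = e.2),
                    (if θ ≤ VH e' σ then (1 : ℤ) else 0)) ≤ (E.card : ℤ) := by
                rw [Finset.sum_comm]
                calc ∑ e' ∈ E.filter (fun e' => e'.1 = e.2),
                      ∑ σ ∈ Finset.range τ, (if θ ≤ VH e' σ then (1 : ℤ) else 0)
                    ≤ ∑ e' ∈ E.filter (fun e' => e'.1 = e.2), (1:ℤ) := by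
                      apply Finset.sum_le_sum
                      intro e' he'
                      rw [← spikeCnt_as_sum]
                      exact_mod_cast ih e' (Finset.mem_filter.mp he').1
                  _ ≤ (E.card : ℤ) := by
                      rw [Finset.sum_const, nsmul_eq_mul, mul_one]
                      exact_mod_cast Finset.card_filter_le E _
              linarith
          have hcnt : (1:ℤ) ≤ (spikeCnt (VH e) θ τ : ℤ) := by exact_mod_cast h1
          have hmul : θ ≤ θ * (spikeCnt (VH e) θ τ : ℤ) :=
            le_mul_of_one_le_right (by rw [hθ]; positivity) hcnt
          rw [hθ] at hsp hmul hinv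
          linarith
      · rw [if_neg hsp, Nat.add_zero]
        exact ih e he

  -- each R neuron spikes at most once
  have amoR : ∀ τ, ∀ e ∈ E, spikeCnt (VR e) θ τ ≤ 1 := by
    intro τ
    induction τ with
    | zero => intro e he; simp [spikeCnt]
    | succ τ ih =>
      intro e he
      rw [spikeCnt_succ]
      by_cases hsp : θ ≤ VR e τ
      · rw [if_pos hsp]
        rcases Nat.eq_zero_or_pos (spikeCnt (VR e) θ τ) with h0 | h1
        · omega
        · exfalso
          have hinv := invR e he τ
          have hinc : ∑ σ ∈ Finset.range τ,
              ((if e.1 = s ∧ θ ≤ VH e σ then (1 : ℤ) else 0) +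
                (∑ e' ∈ E.filter (fun e' => e'.2 = e.1),
                  (if θ ≤ VR e' σ then (1 : ℤ) else 0))) ≤ (E.card : ℤ) := by
            rw [Finset.sum_add_distrib]
            have hcard1 : (1:ℤ) ≤ (E.card : ℤ) := by
              exact_mod_cast Finset.card_pos.mpr ⟨e, he⟩
            by_cases hes : e.1 = s
            · have hempty : E.filter (fun e' => e'.2 = e.1) = ∅ := by
                apply Finset.filter_eq_empty_iff.mpr
                intro e' he'
                rw [hes]
                exact hsIn e' he'
              have hA : ∑ σ ∈ Finset.range τ,
                  (∑ e' ∈ E.filter (fun e' => e'.2 = e.1),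
                    (if θ ≤ VR e' σ then (1 : ℤ) else 0)) = 0 := by
                simp [hempty]
              have hB : ∑ σ ∈ Finset.range τ,
                  (if e.1 = s ∧ θ ≤ VH e σ then (1 : ℤ) else 0) ≤ 1 := by
                calc ∑ σ ∈ Finset.range τ, (if e.1 = s ∧ θ ≤ VH e σ then (1 : ℤ) else 0)
                    ≤ ∑ σ ∈ Finset.range τ, (if θ ≤ VH e σ then (1:ℤ) else 0) := by
                      apply Finset.sum_le_sum
                      intro σ hσ
                      by_cases h : θ ≤ VH e σ
                      · rw [if_pos h]; split <;> norm_num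
                      · rw [if_neg h, if_neg (fun hc => h hc.2)]
                  _ = (spikeCnt (VH e) θ τ : ℤ) := (spikeCnt_as_sum _ _ _).symm
                  _ ≤ 1 := by exact_mod_cast amoH τ e he
              linarith
            · have hB : ∑ σ ∈ Finset.range τ,
                  (if e.1 = s ∧ θ ≤ VH e σ then (1 : ℤ) else 0) = 0 := by
                apply Finset.sum_eq_zero
                intro σ hσ
                rw [if_neg]
                rintro ⟨h, -⟩
                exact hes h
              have hA : ∑ σ ∈ Finset.range τ,
                  (∑ e' ∈ E.filter (fun e' => e'.2 = e.1),
                    (if θ ≤ VR e' σ then (1 : ℤ) else 0)) ≤ (E.card : ℤ) := by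
                rw [Finset.sum_comm]
                calc ∑ e' ∈ E.filter (fun e' => e'.2 = e.1),
                      ∑ σ ∈ Finset.range τ, (if θ ≤ VR e' σ then (1 : ℤ) else 0)
                    ≤ ∑ e' ∈ E.filter (fun e' => e'.2 = e.1), (1:ℤ) := by
                      apply Finset.sum_le_sum
                      intro e' he'
                      rw [← spikeCnt_as_sum]
                      exact_mod_cast ih e' (Finset.mem_filter.mp he').1
                  _ ≤ (E.card : ℤ) := by
                      rw [Finset.sum_const, nsmul_eq_mul, mul_one]
                      exact_mod_cast Finset.card_filter_le E _
              linarith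
          have hcnt : (1:ℤ) ≤ (spikeCnt (VR e) θ τ : ℤ) := by exact_mod_cast h1
          have hmul : θ ≤ θ * (spikeCnt (VR e) θ τ : ℤ) :=
            le_mul_of_one_le_right (by rw [hθ]; positivity) hcnt
          rw [hθ] at hsp hmul hinv
          linarith
      · rw [if_neg hsp, Nat.add_zero]
        exact ih e he
  -- at most once, pairwise form
  have honceH : ∀ e ∈ E, ∀ σ τ : ℕ, θ ≤ VH e σ → θ ≤ VH e τ → σ = τ := by
    intro e he σ τ h1 h2
    by_contra hne
    rcases Nat.lt_or_ge σ τ with h | h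
    · have := two_le_spikeCnt (VH e) θ h h1 h2
      have := amoH (τ + 1) e he
      omega
    · have hlt : τ < σ := lt_of_le_of_ne h (Ne.symm hne)
      have := two_le_spikeCnt (VH e) θ hlt h2 h1
      have := amoH (σ + 1) e he
      omega
  have honceR : ∀ e ∈ E, ∀ σ τ : ℕ, θ ≤ VR e σ → θ ≤ VR e τ → σ = τ := by
    intro e he σ τ h1 h2
    by_contra hne
    rcases Nat.lt_or_ge σ τ with h | h
    · have := two_le_spikeCnt (VR e) θ h h1 h2
      have := amoR (τ + 1) e he
      omega
    · have hlt : τ < σ := lt_of_le_of_ne h (Ne.symm hne)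
      have := two_le_spikeCnt (VR e) θ hlt h2 h1
      have := amoR (σ + 1) e he
      omega

  -- backward propagation of spikes
  have hHstep : ∀ τ : ℕ, 1 ≤ τ → (∃ e ∈ E, θ ≤ VH e (τ + 1)) → ∃ e ∈ E, θ ≤ VH e τ := by
    rintro τ hτ ⟨e, he, hsp⟩
    by_contra hno
    push_neg at hno
    have hTrz : VTr τ = 0 := by
      obtain ⟨τ', rfl⟩ := Nat.exists_eq_succ_of_ne_zero (by omega : τ ≠ 0)
      exact hTrZ τ'
    rw [hHEvol e he τ] at hsp
    have hA : (∑ e' ∈ E.filter (fun e' => e'.1 = e.2),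
        (if θ ≤ VH e' τ then (1 : ℤ) else 0)) = 0 := by
      apply Finset.sum_eq_zero
      intro e' he'
      rw [if_neg (not_le_of_gt (hno e' (Finset.mem_filter.mp he').1))]
    have hB : (if e.2 = t ∧ (1 : ℤ) ≤ VTr τ then (1 : ℤ) else 0) = 0 := by
      rw [if_neg]
      rintro ⟨-, hv⟩
      rw [hTrz] at hv
      omega
    rw [if_neg (not_le_of_gt (hno e he)), hA, hB, one_mul, add_zero, add_zero,
      max_eq_right (hHnn e he τ)] at hsp
    exact absurd hsp (not_le_of_gt (hno e he))
  have hRstep : ∀ τ : ℕ, (∃ e ∈ E, θ ≤ VR e (τ + 1)) →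
      (∃ e ∈ E, θ ≤ VR e τ) ∨ (∃ e ∈ E, θ ≤ VH e τ) := by
    rintro τ ⟨e, he, hsp⟩
    by_contra hno
    push_neg at hno
    obtain ⟨hnoR, hnoH⟩ := hno
    rw [hREvol e he τ] at hsp
    have hA : (∑ e' ∈ E.filter (fun e' => e'.2 = e.1),
        (if θ ≤ VR e' τ then (1 : ℤ) else 0)) = 0 := by
      apply Finset.sum_eq_zero
      intro e' he'
      rw [if_neg (not_le_of_gt (hnoR e' (Finset.mem_filter.mp he').1))]
    have hB : (if e.1 = s ∧ θ ≤ VH e τ then (1 : ℤ) else 0) = 0 := by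
      rw [if_neg]
      rintro ⟨-, hv⟩
      exact absurd hv (not_le_of_gt (hnoH e he))
    rw [if_neg (not_le_of_gt (hnoR e he)), hA, hB, one_mul, add_zero, add_zero,
      max_eq_right (hRnn e he τ)] at hsp
    exact absurd hsp (not_le_of_gt (hnoR e he))
  have hHdown : ∀ d σ : ℕ, 1 ≤ σ → (∃ e ∈ E, θ ≤ VH e (σ + d)) → ∃ e ∈ E, θ ≤ VH e σ := by
    intro d
    induction d with
    | zero => intro σ _ h; exact h
    | succ d ihd =>
      intro σ hσ h
      exact ihd σ hσ (hHstep (σ + d) (by omega) h)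
  -- no H spike at time 0
  have hH0no : ∀ e ∈ E, ¬ θ ≤ VH e 0 := by
    intro e he h
    rw [hH0 e he, hθ] at h
    omega
  have hR0no : ∀ e ∈ E, ¬ θ ≤ VR e 0 := by
    intro e he h
    rw [hR0 e he, hθ] at h
    omega
  -- H spikes happen by time |E|
  have hHbound : ∀ e ∈ E, ∀ τ, θ ≤ VH e τ → τ ≤ E.card := by
    intro e he τ hsp
    have hτ1 : 1 ≤ τ := by
      rcases Nat.eq_zero_or_pos τ with rfl | h
      · exact absurd hsp (hH0no e he)
      · exact h
    have hex : ∀ σ ∈ Finset.Icc 1 τ, ∃ e' ∈ E, θ ≤ VH e' σ := by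
      intro σ hσ
      rw [Finset.mem_Icc] at hσ
      apply hHdown (τ - σ) σ hσ.1
      rw [Nat.add_sub_cancel' hσ.2]
      exact ⟨e, he, hsp⟩
    have hcard := card_times_le E (fun e' σ => θ ≤ VH e' σ) (Finset.Icc 1 τ) e hex
      (fun e' he' σ _ τ' _ h1 h2 => honceH e' he' σ τ' h1 h2)
    rw [Nat.card_Icc] at hcard
    omega
  have hRdown : ∀ d σ : ℕ, 1 ≤ σ → (∃ e ∈ E, θ ≤ VR e (σ + d)) →
      (∃ e ∈ E, θ ≤ VR e σ) ∨ σ ≤ E.card := by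
    intro d
    induction d with
    | zero => intro σ _ h; exact Or.inl h
    | succ d ihd =>
      intro σ hσ h
      rcases hRstep (σ + d) h with h' | ⟨e, he, hsp⟩
      · exact ihd σ hσ h'
      · right
        have := hHbound e he (σ + d) hsp
        omega
  -- R spikes happen by time 2|E| + 1
  have hRbound : ∀ e ∈ E, ∀ τ, θ ≤ VR e τ → τ ≤ 2 * E.card + 1 := by
    intro e he τ hsp
    rcases le_or_gt τ (E.card + 1) with h | h
    · omega
    · have hex : ∀ σ ∈ Finset.Icc (E.card + 2) τ, ∃ e' ∈ E, θ ≤ VR e' σ := by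
        intro σ hσ
        rw [Finset.mem_Icc] at hσ
        have h1 : 1 ≤ σ := by omega
        rcases hRdown (τ - σ) σ h1 (by rw [Nat.add_sub_cancel' hσ.2]; exact ⟨e, he, hsp⟩) with
          h' | h'
        · exact h'
        · omega
      have hcard := card_times_le E (fun e' σ => θ ≤ VR e' σ) (Finset.Icc (E.card + 2) τ) e hex
        (fun e' he' σ _ τ' _ h1 h2 => honceR e' he' σ τ' h1 h2)
      rw [Nat.card_Icc] at hcard
      omega
  -- assembly
  refine ⟨⟨fun τ h => by rw [hTrSpike τ h]; omega,
      fun e he τ h => by have := hHbound e he τ h; omega,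
      hRbound⟩, ?_⟩
  intro h e he het τ hsp
  exact h e he het τ (hRbound e he τ hsp) hsp
end

section
/- Time gadget: let t ≥ 1 be an integer and x_1, …, x_t ∈ {0, 1} be given external inflows (x_l is the inflow at vertex h_l, representing that the rejection neuron fires at time l). Consider nonnegative integer flows g_0 on the arc s_t → h_1 with g_0 ≤ 1, g_l on the arc h_l → h_{l+1} with g_l ≤ t for 1 ≤ l ≤ t−1, y on the arc h_t → t_t with y ≤ 1, and z on the arc h_t → r_t with z ≤ t − 1, subject to conservation g_{l−1} + x_l = g_l at each h_l for 1 ≤ l ≤ t−1 and g_{t−1} + x_t = y + z at h_t (for t = 1 the single conservation constraint is g_0 + x_1 = y + z). Then there exists such a flow with g_0 = 1 and y = 1 (a unit of flow pushed from s_t to t_t) if and only if Σ_{l=1}^{t} x_l ≤ t − 1, i.e. if and only if the rejection neuron stops firing after at most t − 1 time steps. -/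
/-- Time gadget.  Given `t ≥ 1` and external inflows
`x 1, …, x t ∈ {0, 1}`, there exist nonnegative integer flows `g 0 ≤ 1` (arc
`s_t → h_1`), `g l ≤ t` for `1 ≤ l ≤ t − 1` (arcs `h_l → h_{l+1}`), `y ≤ 1`
(arc `h_t → t_t`) and `z ≤ t − 1` (arc `h_t → r_t`) satisfying conservation
`g (l−1) + x l = g l` at each `h_l` (`1 ≤ l ≤ t − 1`) and
`g (t−1) + x t = y + z` at `h_t`, with `g 0 = 1` and `y = 1`, if and only if
`∑_{l=1}^{t} x l ≤ t − 1`. -/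
theorem time_gadget
    (t : ℕ) (ht : 1 ≤ t) (x : ℕ → ℕ)
    (hx : ∀ l, 1 ≤ l → l ≤ t → x l ≤ 1) :
    (∃ (g : ℕ → ℕ) (y z : ℕ),
      g 0 ≤ 1 ∧
      (∀ l, 1 ≤ l → l ≤ t - 1 → g l ≤ t) ∧
      y ≤ 1 ∧ z ≤ t - 1 ∧
      (∀ l, 1 ≤ l → l ≤ t - 1 → g (l - 1) + x l = g l) ∧
      g (t - 1) + x t = y + z ∧
      g 0 = 1 ∧ y = 1) ↔
    ∑ l ∈ Finset.Icc 1 t, x l ≤ t - 1 := by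
  have hsplit : ∑ l ∈ Finset.Icc 1 t, x l
      = (∑ l ∈ Finset.Icc 1 (t - 1), x l) + x t := by
    have h : t = (t - 1) + 1 := (Nat.succ_pred_eq_of_pos ht).symm
    rw [h, Finset.sum_Icc_succ_top (by omega)]
    simp
  constructor
  · rintro ⟨g, y, z, hg0, hgl, hy, hz, hcons, hlast, hg0', hy'⟩
    have key : ∀ l, l ≤ t - 1 → g l = 1 + ∑ i ∈ Finset.Icc 1 l, x i := by
      intro l
      induction l with
      | zero => intro _; simp [hg0']
      | succ n ih =>
        intro hn
        have h1 := hcons (n + 1) (by omega) hn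
        rw [Finset.sum_Icc_succ_top (by omega)]
        have := ih (by omega)
        simp at h1
        omega
    have hk := key (t - 1) le_rfl
    omega
  · intro h
    refine ⟨fun l => 1 + ∑ i ∈ Finset.Icc 1 l, x i, 1,
      ∑ l ∈ Finset.Icc 1 t, x l, by simp, ?_, le_rfl, h, ?_, ?_, by simp, rfl⟩
    · intro l h1 h2
      have : ∑ i ∈ Finset.Icc 1 l, x i ≤ l := by
        calc ∑ i ∈ Finset.Icc 1 l, x i ≤ ∑ i ∈ Finset.Icc 1 l, 1 :=
              Finset.sum_le_sum (fun i hi => by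
                simp at hi; exact hx i hi.1 (by omega))
          _ = l := by simp
      dsimp only
      omega
    · intro l h1 h2
      have hl : l = (l - 1) + 1 := (Nat.succ_pred_eq_of_pos h1).symm
      dsimp only
      rw [hl]
      simp only [Nat.add_sub_cancel]
      rw [Finset.sum_Icc_succ_top (by omega)]
      omega
    · dsimp only
      rw [hsplit]
      omega
end

section
/- Energy gadget: let e ≥ 1 be an integer and let x_1, …, x_e be given nonnegative integer external inflows (x_m is the total inflow at vertex j_m coming from the synapse gadgets, one unit per neuron firing). Consider nonnegative integer flows g_0 on the arc s_e → j_1 with g_0 ≤ 1, g_m on the arc j_m → j_{m+1} with g_m ≤ e for 1 ≤ m ≤ e−1, y on the arc j_e → t_e with y ≤ 1, and z on the arc j_e → r_e with z ≤ e − 1, subject to conservation g_{m−1} + x_m = g_m at each j_m for 1 ≤ m ≤ e−1 and g_{e−1} + x_e = y + z at j_e (for e = 1 the single conservation constraint is g_0 + x_1 = y + z). Then there exists such a flow with g_0 = 1 and y = 1 (a unit of flow pushed from s_e to t_e) if and only if Σ_{m=1}^{e} x_m ≤ e − 1, i.e. if and only if at most e − 1 neuron firings occur over the course of the simulation. -/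
/-- Energy gadget.  Given `e ≥ 1` and nonnegative integer external
inflows `x 1, …, x e` (one unit per neuron firing entering each `j_m` from the
synapse gadgets), there exist nonnegative integer flows `g 0 ≤ 1` (arc `s_e → j_1`),
`g m ≤ e` for `1 ≤ m ≤ e − 1` (arcs `j_m → j_{m+1}`), `y ≤ 1` (arc `j_e → t_e`)
and `z ≤ e − 1` (arc `j_e → r_e`) satisfying conservation `g (m−1) + x m = g m` at
each `j_m` (`1 ≤ m ≤ e − 1`) and `g (e−1) + x e = y + z` at `j_e`, with `g 0 = 1`
and `y = 1`, if and only if `∑_{m=1}^{e} x m ≤ e − 1`. -/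
theorem energy_gadget
    (e : ℕ) (he : 1 ≤ e) (x : ℕ → ℕ) :
    (∃ (g : ℕ → ℕ) (y z : ℕ),
      g 0 ≤ 1 ∧
      (∀ m, 1 ≤ m → m ≤ e - 1 → g m ≤ e) ∧
      y ≤ 1 ∧ z ≤ e - 1 ∧
      (∀ m, 1 ≤ m → m ≤ e - 1 → g (m - 1) + x m = g m) ∧
      g (e - 1) + x e = y + z ∧
      g 0 = 1 ∧ y = 1) ↔
    ∑ m ∈ Finset.Icc 1 e, x m ≤ e - 1 := by
  have step : ∀ n, 1 ≤ n →
      ∑ k ∈ Finset.Icc 1 n, x k = ∑ k ∈ Finset.Icc 1 (n - 1), x k + x n := by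
    intro n hn
    rcases n with _ | m
    · omega
    · rw [Finset.sum_Icc_succ_top (by omega : 1 ≤ m + 1)]
      simp
  constructor
  · rintro ⟨g, y, z, hg0le, hgm, hy, hz, hcons, hlast, hg0, hy1⟩
    have key : ∀ m, m ≤ e - 1 → g m = 1 + ∑ k ∈ Finset.Icc 1 m, x k := by
      intro m
      induction m with
      | zero => intro _; simpa using hg0
      | succ n ih =>
        intro h
        have hc := hcons (n + 1) (by omega) h
        have hn := ih (by omega)
        rw [step (n + 1) (by omega)]
        simp only [Nat.add_sub_cancel] at hc ⊢
        omega
    have hk := key (e - 1) le_rfl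
    have hs := step e he
    omega
  · intro hsum
    refine ⟨fun m => 1 + ∑ k ∈ Finset.Icc 1 m, x k, 1, ∑ k ∈ Finset.Icc 1 e, x k,
      ?_, ?_, le_rfl, hsum, ?_, ?_, by simp, rfl⟩
    · simp
    · intro m h1 h2
      dsimp only
      have hle : ∑ k ∈ Finset.Icc 1 m, x k ≤ ∑ k ∈ Finset.Icc 1 e, x k :=
        Finset.sum_le_sum_of_subset (Finset.Icc_subset_Icc le_rfl (by omega))
      omega
    · intro m h1 h2
      dsimp only
      have := step m h1
      omega
    · dsimp only
      have := step e he
      omega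
end

section
/- Failure gadget: let t ≥ 1 be an integer and x_1, …, x_t ∈ {0, 1} be given external inflows (x_l is the inflow at vertex f_l, representing a violation of the firing behaviour at time l). Consider nonnegative integer flows g_0 on the arc s_f → f_1, g_l on the arcs f_l → f_{l+1} for 1 ≤ l ≤ t−1, and y_l on the arcs f_l → t_f for 1 ≤ l ≤ t, each at most 1, subject to conservation g_{l−1} + x_l = g_l + y_l at each f_l for 1 ≤ l ≤ t−1 and g_{t−1} + x_t = y_t at f_t (for t = 1: g_0 + x_1 = y_1). Then there exists such a flow with g_0 = 1 in which the total flow into t_f, namely Σ_{l=1}^{t} y_l, is at most 1, if and only if x_l = 0 for all l; and in that case the total flow into t_f equals exactly 1. (A unit of flow can be pushed from s_f to t_f if and only if there is no flow at all from any node n_{i,k} into the failure gadget.) -/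
/-- Telescoping conservation lemma. -/
lemma failure_gadget_aux (x g y : ℕ → ℕ) :
    ∀ n, (∀ l, 1 ≤ l → l ≤ n → g (l - 1) + x l = g l + y l) →
      g 0 + ∑ l ∈ Finset.Icc 1 n, x l = g n + ∑ l ∈ Finset.Icc 1 n, y l := by
  intro n
  induction n with
  | zero => simp
  | succ m ih =>
    intro h
    rw [Finset.sum_Icc_succ_top (by omega), Finset.sum_Icc_succ_top (by omega)]
    have h1 := h (m + 1) (by omega) le_rfl
    have h2 := ih (fun l hl hl' => h l hl (by omega))
    simp only [Nat.add_sub_cancel] at h1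
    omega

lemma failure_gadget_sum (t : ℕ) (ht : 1 ≤ t) (x g y : ℕ → ℕ)
    (hcons : ∀ l, 1 ≤ l → l ≤ t - 1 → g (l - 1) + x l = g l + y l)
    (hlast : g (t - 1) + x t = y t) :
    g 0 + ∑ l ∈ Finset.Icc 1 t, x l = ∑ l ∈ Finset.Icc 1 t, y l := by
  obtain ⟨m, rfl⟩ : ∃ m, t = m + 1 := ⟨t - 1, by omega⟩
  have h2 := failure_gadget_aux x g y m (fun l hl hl' => hcons l hl (by omega))
  rw [Finset.sum_Icc_succ_top (by omega), Finset.sum_Icc_succ_top (by omega)]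
  simp only [Nat.add_sub_cancel] at hlast
  omega

/-- Failure gadget.  Given `t ≥ 1` and external inflows
`x 1, …, x t ∈ {0, 1}` (a violation of the firing behaviour at time `l`), consider
nonnegative integer flows `g 0` (arc `s_f → f_1`), `g l` (arcs `f_l → f_{l+1}`,
`1 ≤ l ≤ t − 1`) and `y l` (arcs `f_l → t_f`, `1 ≤ l ≤ t`), each at most `1`,
satisfying conservation `g (l−1) + x l = g l + y l` at each `f_l` (`1 ≤ l ≤ t − 1`)
and `g (t−1) + x t = y t` at `f_t`.  Then there exists such a flow with `g 0 = 1`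
and total flow into `t_f` at most `1` iff `x l = 0` for all `1 ≤ l ≤ t`; and in
that case the total flow into `t_f` of any such flow equals exactly `1`. -/
theorem failure_gadget
    (t : ℕ) (ht : 1 ≤ t) (x : ℕ → ℕ)
    (hx : ∀ l, 1 ≤ l → l ≤ t → x l ≤ 1) :
    ((∃ (g : ℕ → ℕ) (y : ℕ → ℕ),
      g 0 = 1 ∧
      (∀ l, l ≤ t - 1 → g l ≤ 1) ∧
      (∀ l, 1 ≤ l → l ≤ t → y l ≤ 1) ∧
      (∀ l, 1 ≤ l → l ≤ t - 1 → g (l - 1) + x l = g l + y l) ∧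
      g (t - 1) + x t = y t ∧
      ∑ l ∈ Finset.Icc 1 t, y l ≤ 1) ↔
      (∀ l, 1 ≤ l → l ≤ t → x l = 0)) ∧
    ((∀ l, 1 ≤ l → l ≤ t → x l = 0) →
      ∀ (g : ℕ → ℕ) (y : ℕ → ℕ),
        g 0 = 1 →
        (∀ l, l ≤ t - 1 → g l ≤ 1) →
        (∀ l, 1 ≤ l → l ≤ t → y l ≤ 1) →
        (∀ l, 1 ≤ l → l ≤ t - 1 → g (l - 1) + x l = g l + y l) →
        g (t - 1) + x t = y t →
        ∑ l ∈ Finset.Icc 1 t, y l = 1) := by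
  have hxsum : (∀ l, 1 ≤ l → l ≤ t → x l = 0) ↔ ∑ l ∈ Finset.Icc 1 t, x l = 0 := by
    rw [Finset.sum_eq_zero_iff]
    constructor
    · intro h l hl
      simp only [Finset.mem_Icc] at hl
      exact h l hl.1 hl.2
    · intro h l h1 h2
      exact h l (Finset.mem_Icc.mpr ⟨h1, h2⟩)
  constructor
  · constructor
    · rintro ⟨g, y, hg0, _, _, hcons, hlast, hy1⟩
      have := failure_gadget_sum t ht x g y hcons hlast
      rw [hxsum]
      omega
    · intro hx0
      refine ⟨fun _ => 1, fun l => if l = t then 1 else 0, rfl, fun l _ => le_rfl,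
        fun l _ _ => by dsimp only; split <;> omega, fun l h1 h2 => ?_, ?_, ?_⟩
      · have : l ≠ t := by omega
        simp [this, hx0 l h1 (by omega)]
      · simp [hx0 t ht le_rfl]
      · have : ∑ l ∈ Finset.Icc 1 t, (if l = t then 1 else 0) = 1 := by
          rw [Finset.sum_ite_eq' (Finset.Icc 1 t) t (fun _ => 1)]
          simp [ht]
        exact le_of_eq this
  · intro hx0 g y hg0 _ _ hcons hlast
    have := failure_gadget_sum t ht x g y hcons hlast
    rw [hxsum] at hx0
    omega
end
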